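/- arXiv:math/0511584 — 6 statements merged into one kernel-verified Lean document; each statement's English description precedes it below -/
import Mathlib

section
/- Let φ be of non-zero-step type with classical semiconjugation (g, α) as in the context. Then for every solution of the forward equation, i.e. every pair (σ, τ) with σ : ℍ → ℍ analytic, τ ∈ Aut(ℍ) and σ ∘ φ = τ ∘ σ, one has ρ_ℍ(σ(z), σ(w)) ≤ ρ_ℍ(g(z), g(w)) for all z, w ∈ ℍ. -/
open Complex Filter Set Topology

noncomputable section

/-- The upper half-plane `ℍ`, as a subset of `ℂ`. -/
def UHP : Set ℂ := {z : ℂ | 0 < z.im}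

/-- The hyperbolic distance `ρ_ℍ` on the upper half-plane. -/
noncomputable def rho (z w : ℂ) : ℝ :=
  2 * Real.arsinh (‖z - w‖ / (2 * Real.sqrt (z.im * w.im)))

/-- The Stolz angle `{z ∈ ℍ : θ < Arg z < π - θ}` at infinity. -/
def StolzAngle (θ : ℝ) : Set ℂ :=
  {z : ℂ | θ < Complex.arg z ∧ Complex.arg z < Real.pi - θ}

/-- `f(z) → 0` as `z → ∞` within every Stolz angle. -/
def NTLimZeroAtInf (f : ℂ → ℂ) : Prop :=
  ∀ θ : ℝ, 0 < θ → θ < Real.pi / 2 →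
    Filter.Tendsto f
      (Filter.comap (fun z : ℂ => ‖z‖) Filter.atTop ⊓
        Filter.principal (StolzAngle θ))
      (nhds (0 : ℂ))

/-- `τ` is a conformal automorphism of the upper half-plane: on `ℍ` it is given by a
Möbius transformation with real coefficients and positive determinant. -/
def IsAutH (τ : ℂ → ℂ) : Prop :=
  ∃ a b c d : ℝ, 0 < a * d - b * c ∧
    ∀ z ∈ UHP, τ z = ((a : ℂ) * z + (b : ℂ)) / ((c : ℂ) * z + (d : ℂ))

/-! ### Auxiliary lemmas -/

lemma sub_conj_ne {z w : ℂ} (hz : z ∈ UHP) (hw : w ∈ UHP) : z - (starRingEnd ℂ) w ≠ 0 := by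
  intro h
  have h2 : (z - (starRingEnd ℂ) w).im = 0 := by rw [h]; simp
  simp [Complex.sub_im, Complex.conj_im] at h2
  have := hz.out; have := hw.out; linarith

lemma sq_abs_sub_conj (z w : ℂ) :
    (‖z - (starRingEnd ℂ) w‖)^2 = (‖z - w‖)^2 + 4 * z.im * w.im := by
  rw [Complex.sq_norm, Complex.sq_norm]
  simp [Complex.normSq_apply, Complex.sub_re, Complex.sub_im, Complex.conj_re, Complex.conj_im]
  ring

lemma abs_lt_abs_conj {z w : ℂ} (hz : z ∈ UHP) (hw : w ∈ UHP) :
    ‖z - w‖ < ‖z - (starRingEnd ℂ) w‖ := by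
  have h := sq_abs_sub_conj z w
  have hz' := hz.out; have hw' := hw.out
  nlinarith [norm_nonneg (z - w), norm_nonneg (z - (starRingEnd ℂ) w)]

lemma S_mem {ζ v : ℂ} (hζ : ζ ∈ UHP) (hv : v ∈ UHP) :
    (ζ - v)/(ζ - (starRingEnd ℂ) v) ∈ Metric.ball (0:ℂ) 1 := by
  simp only [Metric.mem_ball, Complex.dist_eq, sub_zero, norm_div]
  exact div_lt_one (norm_pos_iff.mpr (sub_conj_ne hζ hv)) |>.mpr (abs_lt_abs_conj hζ hv)

lemma im_Tinv (w u : ℂ) :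
    ((w - (starRingEnd ℂ) w * u)/(1-u)).im
      = w.im * (1 - Complex.normSq u) / Complex.normSq (1-u) := by
  rw [Complex.div_im]
  simp [Complex.normSq_apply, Complex.sub_re, Complex.sub_im, Complex.mul_re, Complex.mul_im,
    Complex.conj_re, Complex.conj_im]
  ring

lemma Tinv_mem {w u : ℂ} (hw : w ∈ UHP) (hu : u ∈ Metric.ball (0:ℂ) 1) :
    (w - (starRingEnd ℂ) w * u)/(1-u) ∈ UHP := by
  have hu' : ‖u‖ < 1 := by simpa [Complex.dist_eq] using hu
  have h1 : Complex.normSq u < 1 := by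
    have := Complex.sq_norm u
    nlinarith [norm_nonneg u]
  have h2 : (1:ℂ) - u ≠ 0 := by
    intro h; rw [sub_eq_zero] at h; simp [← h] at hu'
  have h3 : 0 < Complex.normSq (1 - u) := Complex.normSq_pos.mpr h2
  have him := im_Tinv w u
  have hw' := hw.out
  show 0 < ((w - (starRingEnd ℂ) w * u)/(1-u)).im
  rw [him]
  exact div_pos (mul_pos hw' (by linarith)) h3

lemma Tinv_T {z w : ℂ} (hz : z ∈ UHP) (hw : w ∈ UHP) :
    (w - (starRingEnd ℂ) w * ((z - w)/(z - (starRingEnd ℂ) w)))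
      / (1 - ((z - w)/(z - (starRingEnd ℂ) w))) = z := by
  have h1 : z - (starRingEnd ℂ) w ≠ 0 := sub_conj_ne hz hw
  have h2 : w - (starRingEnd ℂ) w ≠ 0 := sub_conj_ne hw hw
  have h3 : (1:ℂ) - (z - w)/(z - (starRingEnd ℂ) w) ≠ 0 := by
    rw [sub_ne_zero]
    intro h
    have h4 := (div_eq_one_iff_eq h1).mp h.symm
    exact h2 (by linear_combination -h4)
  rw [div_eq_iff h3]
  have hq : (z - (starRingEnd ℂ) w) * ((z - w)/(z - (starRingEnd ℂ) w)) = z - w := by field_simp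
  linear_combination hq

/-- The Schwarz–Pick inequality on the upper half-plane, pseudo-hyperbolic form. -/
lemma schwarzPick_key {f : ℂ → ℂ} (hmaps : Set.MapsTo f UHP UHP)
    (hdiff : DifferentiableOn ℂ f UHP) {z w : ℂ} (hz : z ∈ UHP) (hw : w ∈ UHP) :
    ‖f z - f w‖ / ‖f z - (starRingEnd ℂ) (f w)‖
      ≤ ‖z - w‖ / ‖z - (starRingEnd ℂ) w‖ := by
  have hfw : f w ∈ UHP := hmaps hw
  set Tinv : ℂ → ℂ := fun u => (w - (starRingEnd ℂ) w * u)/(1 - u) with hTinv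
  set S : ℂ → ℂ := fun ζ => (ζ - f w)/(ζ - (starRingEnd ℂ) (f w)) with hS
  have hTd : DifferentiableOn ℂ Tinv (Metric.ball 0 1) := by
    apply DifferentiableOn.div
    · exact (differentiableOn_const _).sub ((differentiableOn_const _).mul differentiableOn_id)
    · exact (differentiableOn_const _).sub differentiableOn_id
    · intro u hu
      have hu' : ‖u‖ < 1 := by simpa [Complex.dist_eq] using hu
      intro h0; rw [sub_eq_zero] at h0; simp [← h0] at hu'
  have hTmaps : Set.MapsTo Tinv (Metric.ball 0 1) UHP := fun u hu => Tinv_mem hw hu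
  have hSd : DifferentiableOn ℂ S UHP :=
    DifferentiableOn.div (differentiableOn_id.sub (differentiableOn_const _))
      (differentiableOn_id.sub (differentiableOn_const _))
      (fun ζ hζ => sub_conj_ne hζ hfw)
  have hSmaps : Set.MapsTo S UHP (Metric.ball 0 1) := fun ζ hζ => S_mem hζ hfw
  have hhd : DifferentiableOn ℂ (S ∘ f ∘ Tinv) (Metric.ball 0 1) :=
    (hSd.comp hdiff hmaps).comp hTd hTmaps
  have hmapsh : Set.MapsTo (S ∘ f ∘ Tinv) (Metric.ball 0 1) (Metric.ball 0 1) :=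
    (hSmaps.comp hmaps).comp hTmaps
  have h0 : (S ∘ f ∘ Tinv) 0 = 0 := by
    simp only [Function.comp_apply, hTinv, hS]
    norm_num
  have hTz : (z - w)/(z - (starRingEnd ℂ) w) ∈ Metric.ball (0:ℂ) 1 := S_mem hz hw
  have key := by
    have k := Complex.dist_le_dist_of_mapsTo_ball hhd (by rw [h0]; exact hmapsh.mono_right Metric.ball_subset_closedBall) hTz
    rw [h0] at k; exact k
  simp only [Function.comp_apply, hTinv, hS, Complex.dist_eq, sub_zero] at key
  rw [Tinv_T hz hw] at key
  simpa only [norm_div] using key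

/-- Monotonicity transfer from the pseudo-hyperbolic form to `rho`. -/
lemma rho_mono {u v z w : ℂ} (hu : u ∈ UHP) (hv : v ∈ UHP) (hz : z ∈ UHP) (hw : w ∈ UHP)
    (hkey : ‖u - v‖ / ‖u - (starRingEnd ℂ) v‖
      ≤ ‖z - w‖ / ‖z - (starRingEnd ℂ) w‖) :
    rho u v ≤ rho z w := by
  set a := ‖u - v‖ with ha
  set b := ‖z - w‖ with hb
  set P := ‖u - (starRingEnd ℂ) v‖ with hP
  set Q := ‖z - (starRingEnd ℂ) w‖ with hQ
  have hP0 : 0 < P := norm_pos_iff.mpr (sub_conj_ne hu hv)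
  have hQ0 : 0 < Q := norm_pos_iff.mpr (sub_conj_ne hz hw)
  have ha0 : 0 ≤ a := norm_nonneg _
  have hb0 : 0 ≤ b := norm_nonneg _
  have hPsq : P^2 = a^2 + 4 * u.im * v.im := sq_abs_sub_conj u v
  have hQsq : Q^2 = b^2 + 4 * z.im * w.im := sq_abs_sub_conj z w
  set s := Real.sqrt (u.im * v.im) with hs
  set t := Real.sqrt (z.im * w.im) with ht
  have hu' := hu.out; have hv' := hv.out; have hz' := hz.out; have hw' := hw.out
  have hs0 : 0 < s := Real.sqrt_pos.mpr (by positivity)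
  have ht0 : 0 < t := Real.sqrt_pos.mpr (by positivity)
  have hssq : s^2 = u.im * v.im := Real.sq_sqrt (by positivity)
  have htsq : t^2 = z.im * w.im := Real.sq_sqrt (by positivity)
  have hcross : a * Q ≤ b * P := by
    rw [div_le_div_iff₀ hP0 hQ0] at hkey; linarith
  have h1 : (a*Q)^2 ≤ (b*P)^2 :=
    pow_le_pow_left₀ (mul_nonneg ha0 hQ0.le) hcross 2
  have hsq : (a * t)^2 ≤ (b * s)^2 := by
    nlinarith [h1, hPsq, hQsq, hssq, htsq, sq_nonneg a, sq_nonneg b]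
  have hat : a * t ≤ b * s := le_of_pow_le_pow_left₀ two_ne_zero (by positivity) hsq
  have hdivle : a / (2 * s) ≤ b / (2 * t) := by
    rw [div_le_div_iff₀ (by positivity) (by positivity)]; nlinarith
  unfold rho
  have := Real.arsinh_le_arsinh.mpr hdivle
  linarith

/-- The Schwarz–Pick inequality on the upper half-plane. -/
lemma schwarzPick {f : ℂ → ℂ} (hmaps : Set.MapsTo f UHP UHP)
    (hdiff : DifferentiableOn ℂ f UHP) {z w : ℂ} (hz : z ∈ UHP) (hw : w ∈ UHP) :
    rho (f z) (f w) ≤ rho z w :=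
  rho_mono (hmaps hz) (hmaps hw) hz hw (schwarzPick_key hmaps hdiff hz hw)

lemma mobius_den_ne {a b c d : ℝ} (hdet : 0 < a*d - b*c) {u : ℂ} (hu : u ∈ UHP) :
    (c:ℂ)*u + d ≠ 0 := by
  intro h
  by_cases hc : c = 0
  · subst hc
    have hd : (d:ℂ) = 0 := by simpa using h
    have : d = 0 := by exact_mod_cast hd
    rw [this] at hdet; simp at hdet
  · have him : c * u.im = 0 := by
      have h5 : ((c:ℂ)*u + d).im = c * u.im := by simp [Complex.add_im, Complex.mul_im]
      rw [h] at h5; simpa using h5.symm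
    rcases mul_eq_zero.mp him with h' | h'
    · exact hc h'
    · have := hu.out; linarith

lemma mobius_im (a b c d : ℝ) (u : ℂ) :
    (((a:ℂ)*u + b)/((c:ℂ)*u + d)).im
      = (a*d - b*c) * u.im / Complex.normSq ((c:ℂ)*u + d) := by
  rw [Complex.div_im]
  simp [Complex.normSq_apply, Complex.add_re, Complex.add_im, Complex.mul_re, Complex.mul_im]
  ring

lemma mobius_sub (a b c d : ℝ) (u v : ℂ) (h1 : (c:ℂ)*u + d ≠ 0) (h2 : (c:ℂ)*v + d ≠ 0) :
    ((a:ℂ)*u + b)/((c:ℂ)*u + d) - ((a:ℂ)*v + b)/((c:ℂ)*v + d)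
      = ((a*d - b*c : ℝ) : ℂ) * (u - v) / (((c:ℂ)*u + d) * ((c:ℂ)*v + d)) := by
  rw [div_sub_div _ _ h1 h2]
  congr 1
  push_cast
  ring

lemma rho_mobius {a b c d : ℝ} (hdet : 0 < a*d - b*c) {u v : ℂ} (hu : u ∈ UHP) (hv : v ∈ UHP) :
    rho (((a:ℂ)*u + b)/((c:ℂ)*u + d)) (((a:ℂ)*v + b)/((c:ℂ)*v + d)) = rho u v := by
  have h1 := mobius_den_ne hdet hu
  have h2 := mobius_den_ne hdet hv
  set D1 := ‖(c:ℂ)*u + d‖ with hD1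
  set D2 := ‖(c:ℂ)*v + d‖ with hD2
  have hD1p : 0 < D1 := norm_pos_iff.mpr h1
  have hD2p : 0 < D2 := norm_pos_iff.mpr h2
  have hu' := hu.out; have hv' := hv.out
  set Δ := a*d - b*c with hΔ
  have habs : ‖((a:ℂ)*u + b)/((c:ℂ)*u + d) - ((a:ℂ)*v + b)/((c:ℂ)*v + d)‖
      = Δ * ‖u - v‖ / (D1 * D2) := by
    rw [mobius_sub a b c d u v h1 h2]
    rw [norm_div, norm_mul, norm_mul]
    rw [Complex.norm_real, Real.norm_eq_abs, abs_of_pos hdet]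
  have him1 : (((a:ℂ)*u + b)/((c:ℂ)*u + d)).im = Δ * u.im / D1^2 := by
    rw [mobius_im, Complex.normSq_eq_norm_sq]
  have him2 : (((a:ℂ)*v + b)/((c:ℂ)*v + d)).im = Δ * v.im / D2^2 := by
    rw [mobius_im, Complex.normSq_eq_norm_sq]
  unfold rho
  rw [habs, him1, him2]
  have hsq : Real.sqrt (Δ * u.im / D1^2 * (Δ * v.im / D2^2))
      = Δ * Real.sqrt (u.im * v.im) / (D1 * D2) := by
    rw [show Δ * u.im / D1^2 * (Δ * v.im / D2^2) = (Δ / (D1*D2))^2 * (u.im * v.im) by ring]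
    rw [Real.sqrt_mul (sq_nonneg _), Real.sqrt_sq (by positivity)]
    ring
  rw [hsq]
  have hs : 0 < Real.sqrt (u.im*v.im) := Real.sqrt_pos.mpr (by positivity)
  have harg : Δ * ‖u - v‖ / (D1 * D2) / (2 * (Δ * Real.sqrt (u.im*v.im) / (D1*D2)))
      = ‖u - v‖ / (2 * Real.sqrt (u.im * v.im)) := by
    field_simp
  rw [harg]

lemma rho_scale {x y : ℝ} (hy : 0 < y) {u v : ℂ} (hu : u ∈ UHP) (hv : v ∈ UHP) :
    rho ((u - (x:ℂ))/(y:ℂ)) ((v - (x:ℂ))/(y:ℂ)) = rho u v := by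
  have hdet : (0:ℝ) < 1 * y - (-x) * 0 := by simpa using hy
  have h := rho_mobius (a := 1) (b := -x) (c := 0) (d := y) hdet (u := u) (v := v)
  simpa [sub_eq_add_neg] using h hu hv

/-- Every solution `(σ, τ)` of the forward equation is dominated by the classical
semiconjugation `g` in the hyperbolic metric. -/
theorem forward_solutions_hyperbolically_dominated
    (φ p g : ℂ → ℂ) (A b : ℝ) (z₀ : ℂ)
    (hz₀ : z₀ ∈ UHP)
    (hφmaps : Set.MapsTo φ UHP UHP)
    (hφdiff : DifferentiableOn ℂ φ UHP)
    (hφnotaut : ¬ IsAutH φ)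
    (hA : 1 ≤ A)
    (hφeq : ∀ z ∈ UHP, φ z = (A : ℂ) * z + p z)
    (hpim : ∀ z ∈ UHP, 0 < (p z).im)
    (hpnt : NTLimZeroAtInf (fun z => p z / z))
    (hnzs : 1 < A ∨ (A = 1 ∧ ∃ s : ℝ, 0 < s ∧
      Filter.Tendsto (fun n : ℕ => rho (φ^[n] z₀) (φ^[n + 1] z₀)) Filter.atTop (nhds s)))
    (hgmaps : Set.MapsTo g UHP UHP)
    (hgdiff : DifferentiableOn ℂ g UHP)
    (hgz₀ : g z₀ = Complex.I)
    (hglim : TendstoLocallyUniformlyOn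
      (fun (n : ℕ) (z : ℂ) => (φ^[n] z - ((φ^[n] z₀).re : ℂ)) / ((φ^[n] z₀).im : ℂ))
      g Filter.atTop UHP)
    (hgconj : ∀ z ∈ UHP, g (φ z) = (A : ℂ) * g z + (b : ℂ))
    (hblim : Filter.Tendsto
      (fun n : ℕ => ((φ^[n + 1] z₀).re - (φ^[n] z₀).re) / (φ^[n] z₀).im)
      Filter.atTop (nhds b))
    (hbne : A = 1 → b ≠ 0)
    (σ τ : ℂ → ℂ)
    (hσmaps : Set.MapsTo σ UHP UHP)
    (hσdiff : DifferentiableOn ℂ σ UHP)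
    (hτ : IsAutH τ)
    (hστ : ∀ z ∈ UHP, σ (φ z) = τ (σ z)) :
    ∀ z ∈ UHP, ∀ w ∈ UHP, rho (σ z) (σ w) ≤ rho (g z) (g w) := by
  obtain ⟨a, b', c, d, hdet, hτf⟩ := hτ
  intro z hz w hw
  have hUHPopen : IsOpen UHP := isOpen_lt continuous_const Complex.continuous_im
  have hiter : ∀ n : ℕ, Set.MapsTo φ^[n] UHP UHP := fun n => hφmaps.iterate n
  -- τ preserves rho on UHP
  have hτiso : ∀ u ∈ UHP, ∀ v ∈ UHP, rho (τ u) (τ v) = rho u v := by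
    intro u hu v hv
    rw [hτf u hu, hτf v hv]
    exact rho_mobius hdet hu hv
  -- Step A: rho (σ (φ^[n] z)) (σ (φ^[n] w)) = rho (σ z) (σ w)
  have stepA : ∀ n : ℕ, rho (σ (φ^[n] z)) (σ (φ^[n] w)) = rho (σ z) (σ w) := by
    intro n
    induction n with
    | zero => simp
    | succ n ih =>
      rw [Function.iterate_succ_apply', Function.iterate_succ_apply']
      rw [hστ _ (hiter n hz), hστ _ (hiter n hw)]
      rw [hτiso _ (hσmaps (hiter n hz)) _ (hσmaps (hiter n hw))]
      exact ih
  -- Step B: rho (σ z) (σ w) ≤ rho of normalized iterates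
  have stepB : ∀ n : ℕ, rho (σ z) (σ w)
      ≤ rho ((φ^[n] z - ((φ^[n] z₀).re : ℂ)) / ((φ^[n] z₀).im : ℂ))
          ((φ^[n] w - ((φ^[n] z₀).re : ℂ)) / ((φ^[n] z₀).im : ℂ)) := by
    intro n
    have hy : 0 < (φ^[n] z₀).im := (hiter n hz₀).out
    rw [rho_scale hy (hiter n hz) (hiter n hw)]
    rw [← stepA n]
    exact schwarzPick hσmaps hσdiff (hiter n hz) (hiter n hw)
  -- Step D: convergence of rho of normalized iterates to rho (g z) (g w)
  have hgz : Tendsto (fun n : ℕ => (φ^[n] z - ((φ^[n] z₀).re : ℂ)) / ((φ^[n] z₀).im : ℂ))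
      atTop (nhds (g z)) := hglim.tendsto_at hz
  have hgw : Tendsto (fun n : ℕ => (φ^[n] w - ((φ^[n] z₀).re : ℂ)) / ((φ^[n] z₀).im : ℂ))
      atTop (nhds (g w)) := hglim.tendsto_at hw
  have hgzU : g z ∈ UHP := hgmaps hz
  have hgwU : g w ∈ UHP := hgmaps hw
  have hden : (2 : ℝ) * Real.sqrt ((g z).im * (g w).im) ≠ 0 := by
    have := hgzU.out; have := hgwU.out
    have : 0 < Real.sqrt ((g z).im * (g w).im) := Real.sqrt_pos.mpr (by positivity)
    positivity
  have habs : Tendsto (fun n : ℕ => ‖((φ^[n] z - ((φ^[n] z₀).re : ℂ)) / ((φ^[n] z₀).im : ℂ)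
        - (φ^[n] w - ((φ^[n] z₀).re : ℂ)) / ((φ^[n] z₀).im : ℂ))‖)
      atTop (nhds (‖g z - g w‖)) :=
    (continuous_norm.tendsto _).comp (hgz.sub hgw)
  have him : Tendsto (fun n : ℕ =>
      ((φ^[n] z - ((φ^[n] z₀).re : ℂ)) / ((φ^[n] z₀).im : ℂ)).im
        * ((φ^[n] w - ((φ^[n] z₀).re : ℂ)) / ((φ^[n] z₀).im : ℂ)).im)
      atTop (nhds ((g z).im * (g w).im)) :=
    (((Complex.continuous_im.tendsto _).comp hgz).mul
      ((Complex.continuous_im.tendsto _).comp hgw))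
  have hsqrt := (Real.continuous_sqrt.tendsto _).comp him
  have hfrac := habs.div ((tendsto_const_nhds (x := (2:ℝ))).mul hsqrt) hden
  have harsinh := ((Real.continuous_arsinh.tendsto _).comp hfrac).const_mul (2:ℝ)
  have stepD : Tendsto (fun n : ℕ =>
      rho ((φ^[n] z - ((φ^[n] z₀).re : ℂ)) / ((φ^[n] z₀).im : ℂ))
          ((φ^[n] w - ((φ^[n] z₀).re : ℂ)) / ((φ^[n] z₀).im : ℂ)))
      atTop (nhds (rho (g z) (g w))) := by
    unfold rho
    exact harsinh
  exact ge_of_tendsto stepD (Filter.Eventually.of_forall stepB)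
end
end

section
/- Let φ : ℍ → ℍ be analytic of parabolic zero-step type. Then the family 𝓕(φ) of non-trivial solutions of the forward equation is empty: if σ : ℍ → ℍ is analytic, τ ∈ Aut(ℍ), and σ ∘ φ = τ ∘ σ, then σ is constant. -/
open Complex Filter Set Topology

noncomputable section

namespace PZS
open Metric

lemma isOpen_UHP : IsOpen UHP := isOpen_lt continuous_const Complex.continuous_im

lemma convex_UHP : Convex ℝ UHP := convex_halfSpace_im_gt 0

/-- |z - conj w|^2 = |z-w|^2 + 4 Im z Im w -/
lemma sq_abs_sub_conj (z w : ℂ) :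
    ‖z - (starRingEnd ℂ) w‖ ^ 2 = ‖z - w‖ ^ 2 + 4 * z.im * w.im := by
  rw [← Complex.normSq_eq_norm_sq, ← Complex.normSq_eq_norm_sq]
  simp [Complex.normSq_apply, Complex.sub_re, Complex.sub_im, Complex.conj_re, Complex.conj_im]
  ring

/-- Blaschke factor of the upper half plane -/
def Bk (a z : ℂ) : ℂ := (z - a) / (z - (starRingEnd ℂ) a)

/-- Inverse map from the disc to the half plane -/
def Psi (a w : ℂ) : ℂ := (a - (starRingEnd ℂ) a * w) / (1 - w)

lemma sub_conj_ne {z a : ℂ} (hz : z ∈ UHP) (ha : a ∈ UHP) : z - (starRingEnd ℂ) a ≠ 0 := by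
  intro h
  have : (z - (starRingEnd ℂ) a).im = 0 := by rw [h]; simp
  simp only [Complex.sub_im, Complex.conj_im] at this
  have hz' : 0 < z.im := hz
  have ha' : 0 < a.im := ha
  linarith

lemma abs_Bk_lt_one {a z : ℂ} (ha : a ∈ UHP) (hz : z ∈ UHP) : ‖Bk a z‖ < 1 := by
  rw [Bk, norm_div, div_lt_one (norm_pos_iff.mpr (sub_conj_ne hz ha))]
  have h := sq_abs_sub_conj z a
  have hz' : 0 < z.im := hz
  have ha' : 0 < a.im := ha
  nlinarith [norm_nonneg (z - a), norm_nonneg (z - (starRingEnd ℂ) a)]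

lemma Bk_mem_ball {a z : ℂ} (ha : a ∈ UHP) (hz : z ∈ UHP) : Bk a z ∈ ball (0:ℂ) 1 := by
  simpa [mem_ball, Complex.dist_eq] using abs_Bk_lt_one ha hz

lemma Bk_self (a : ℂ) : Bk a a = 0 := by simp [Bk]

lemma abs_Bk_symm (a z : ℂ) : ‖Bk a z‖ = ‖Bk z a‖ := by
  rw [Bk, Bk, norm_div, norm_div]
  rw [show a - z = -(z - a) by ring, norm_neg]
  congr 1
  rw [← Complex.norm_conj (a - (starRingEnd ℂ) z)]
  rw [show (starRingEnd ℂ) (a - (starRingEnd ℂ) z) = -(z - (starRingEnd ℂ) a) by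
    rw [map_sub, Complex.conj_conj]; ring, norm_neg]

lemma one_sub_ne {w : ℂ} (hw : w ∈ ball (0:ℂ) 1) : (1 : ℂ) - w ≠ 0 := by
  intro h
  have : w = 1 := by linear_combination -h
  rw [this] at hw; simp at hw

lemma mem_ball_sq {w : ℂ} (hw : w ∈ ball (0:ℂ) 1) : w.re ^ 2 + w.im ^ 2 < 1 := by
  have : ‖w‖ < 1 := by simpa [mem_ball, Complex.dist_eq] using hw
  have h2 : Complex.normSq w < 1 := by
    rw [← Complex.sq_norm]; nlinarith [norm_nonneg w]
  simpa [Complex.normSq_apply, sq] using h2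

lemma Psi_mem_UHP {a w : ℂ} (ha : a ∈ UHP) (hw : w ∈ ball (0:ℂ) 1) : Psi a w ∈ UHP := by
  have h1 : (1:ℂ) - w ≠ 0 := one_sub_ne hw
  have hsq := mem_ball_sq hw
  have ha' : 0 < a.im := ha
  show 0 < (Psi a w).im
  rw [Psi, Complex.div_im]
  have hns : 0 < Complex.normSq (1 - w) := Complex.normSq_pos.2 h1
  rw [div_sub_div_same]
  apply div_pos _ hns
  simp only [Complex.sub_im, Complex.sub_re, Complex.mul_im, Complex.mul_re,
    Complex.conj_re, Complex.conj_im, Complex.one_re, Complex.one_im]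
  nlinarith

lemma Bk_Psi {a w : ℂ} (ha : a ∈ UHP) (hw : w ∈ ball (0:ℂ) 1) : Bk a (Psi a w) = w := by
  have h1 : (1:ℂ) - w ≠ 0 := one_sub_ne hw
  have h2 : a - (starRingEnd ℂ) a ≠ 0 := by
    intro h
    have : (a - (starRingEnd ℂ) a).im = 0 := by rw [h]; simp
    simp only [Complex.sub_im, Complex.conj_im] at this
    have ha' : 0 < a.im := ha; linarith
  have hden : (a - (starRingEnd ℂ) a * w) / (1 - w) - (starRingEnd ℂ) a ≠ 0 := by
    rw [show (a - (starRingEnd ℂ) a * w) / (1 - w) - (starRingEnd ℂ) a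
        = (a - (starRingEnd ℂ) a) / (1 - w) by field_simp; try ring]
    exact div_ne_zero h2 h1
  rw [Bk, Psi, div_eq_iff hden]
  field_simp
  ring

lemma Psi_Bk {a z : ℂ} (ha : a ∈ UHP) (hz : z ∈ UHP) : Psi a (Bk a z) = z := by
  have h1 : z - (starRingEnd ℂ) a ≠ 0 := sub_conj_ne hz ha
  have h2 : a - (starRingEnd ℂ) a ≠ 0 := by
    intro h
    have : (a - (starRingEnd ℂ) a).im = 0 := by rw [h]; simp
    simp only [Complex.sub_im, Complex.conj_im] at this
    have ha' : 0 < a.im := ha; linarith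
  have hden : (1:ℂ) - (z - a) / (z - (starRingEnd ℂ) a) ≠ 0 := by
    rw [show (1:ℂ) - (z - a) / (z - (starRingEnd ℂ) a)
        = (a - (starRingEnd ℂ) a) / (z - (starRingEnd ℂ) a) by field_simp; try ring]
    exact div_ne_zero h2 h1
  rw [Psi, Bk]
  rw [div_eq_iff hden]
  field_simp
  ring

lemma Psi_zero (a : ℂ) : Psi a 0 = a := by simp [Psi]

lemma Bk_eq_zero {a b : ℂ} (ha : a ∈ UHP) (hb : b ∈ UHP) : Bk a b = 0 ↔ b = a := by
  rw [Bk, div_eq_zero_iff, sub_eq_zero]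
  have := sub_conj_ne hb ha
  tauto



lemma ne_conj_self {a : ℂ} (ha : a ∈ UHP) : a - (starRingEnd ℂ) a ≠ 0 := sub_conj_ne ha ha

lemma abs_sub_conj_self {a : ℂ} (ha : a ∈ UHP) :
    ‖a - (starRingEnd ℂ) a‖ = 2 * a.im := by
  have h2 : (0:ℝ) < 2 * a.im := by have : 0 < a.im := ha; linarith
  rw [Complex.sub_conj, norm_mul, Complex.norm_I, mul_one, Complex.norm_real, Real.norm_eq_abs, abs_of_pos h2]

lemma hasDerivAt_Bk {a : ℂ} (ha : a ∈ UHP) :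
    HasDerivAt (Bk a) ((a - (starRingEnd ℂ) a)⁻¹) a := by
  have h : a - (starRingEnd ℂ) a ≠ 0 := ne_conj_self ha
  have h1 : HasDerivAt (fun z : ℂ => z - a) 1 a := (hasDerivAt_id a).sub_const a
  have h2 : HasDerivAt (fun z : ℂ => z - (starRingEnd ℂ) a) 1 a := (hasDerivAt_id a).sub_const _
  have h3 := h1.div h2 h
  have : (1 * (a - (starRingEnd ℂ) a) - (a - a) * 1) / (a - (starRingEnd ℂ) a) ^ 2
      = (a - (starRingEnd ℂ) a)⁻¹ := by field_simp; ring
  rw [this] at h3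
  exact h3

lemma differentiableAt_Bk {c z : ℂ} (h : z - (starRingEnd ℂ) c ≠ 0) :
    DifferentiableAt ℂ (Bk c) z := by
  have h1 : DifferentiableAt ℂ (fun z : ℂ => z - c) z := differentiableAt_id.sub_const c
  have h2 : DifferentiableAt ℂ (fun z : ℂ => z - (starRingEnd ℂ) c) z :=
    differentiableAt_id.sub_const _
  exact h1.div h2 h

lemma hasDerivAt_Psi {a : ℂ} :
    HasDerivAt (Psi a) (a - (starRingEnd ℂ) a) 0 := by
  have h1 : HasDerivAt (fun w : ℂ => a - (starRingEnd ℂ) a * w) (-(starRingEnd ℂ) a) 0 := by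
    simpa using ((hasDerivAt_id (0:ℂ)).const_mul ((starRingEnd ℂ) a)).const_sub a
  have h2 : HasDerivAt (fun w : ℂ => (1:ℂ) - w) (-1) 0 := by
    simpa using (hasDerivAt_id (0:ℂ)).const_sub 1
  have h : (1:ℂ) - 0 ≠ 0 := by norm_num
  have h3 := h1.div h2 h
  have : (-(starRingEnd ℂ) a * ((1:ℂ) - 0) - (a - (starRingEnd ℂ) a * 0) * (-1)) / ((1:ℂ) - 0) ^ 2
      = a - (starRingEnd ℂ) a := by field_simp; ring
  rw [this] at h3
  exact h3

lemma differentiableAt_Psi {a w : ℂ} (hw : w ∈ ball (0:ℂ) 1) :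
    DifferentiableAt ℂ (Psi a) w := by
  have h1 : DifferentiableAt ℂ (fun w : ℂ => a - (starRingEnd ℂ) a * w) w :=
    (differentiableAt_id.const_mul _).const_sub a
  have h2 : DifferentiableAt ℂ (fun w : ℂ => (1:ℂ) - w) w := differentiableAt_id.const_sub 1
  exact h1.div h2 (one_sub_ne hw)

section SPmach

variable {f : ℂ → ℂ} {a : ℂ}

/-- The conjugated disc map. -/
def Ff (f : ℂ → ℂ) (a : ℂ) : ℂ → ℂ := fun w => Bk (f a) (f (Psi a w))

lemma Ff_diff (hm : MapsTo f UHP UHP) (hd : DifferentiableOn ℂ f UHP) (ha : a ∈ UHP) :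
    DifferentiableOn ℂ (Ff f a) (ball (0:ℂ) 1) := by
  intro w hw
  have hP : Psi a w ∈ UHP := Psi_mem_UHP ha hw
  have h1 : DifferentiableAt ℂ (Psi a) w := differentiableAt_Psi hw
  have h2 : DifferentiableAt ℂ f (Psi a w) :=
    hd.differentiableAt (isOpen_UHP.mem_nhds hP)
  have h3 : DifferentiableAt ℂ (Bk (f a)) (f (Psi a w)) :=
    differentiableAt_Bk (sub_conj_ne (hm hP) (hm ha))
  exact ((h3.comp (Psi a w) h2).comp w h1).differentiableWithinAt

lemma Ff_zero : Ff f a 0 = 0 := by rw [Ff]; simp only [Psi_zero]; exact Bk_self _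

lemma Ff_maps (hm : MapsTo f UHP UHP) (ha : a ∈ UHP) :
    MapsTo (Ff f a) (ball (0:ℂ) 1) (ball (Ff f a 0) 1) := by
  intro w hw
  rw [Ff_zero]
  exact Bk_mem_ball (hm ha) (hm (Psi_mem_UHP ha hw))

lemma SP_q (hm : MapsTo f UHP UHP) (hd : DifferentiableOn ℂ f UHP) (ha : a ∈ UHP)
    {b : ℂ} (hb : b ∈ UHP) :
    ‖Bk (f a) (f b)‖ ≤ ‖Bk a b‖ := by
  have h := Complex.dist_le_div_mul_dist_of_mapsTo_ball (Ff_diff hm hd ha)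
    ((Ff_maps hm ha).mono_right ball_subset_closedBall) (Bk_mem_ball ha hb)
  rw [Ff_zero] at h
  have he : Ff f a (Bk a b) = Bk (f a) (f b) := by rw [Ff, Psi_Bk ha hb]
  rw [he] at h
  simpa [Complex.dist_eq] using h

lemma hasDerivAt_Ff (hm : MapsTo f UHP UHP) (hd : DifferentiableOn ℂ f UHP) (ha : a ∈ UHP) :
    HasDerivAt (Ff f a)
      ((f a - (starRingEnd ℂ) (f a))⁻¹ * (deriv f a * (a - (starRingEnd ℂ) a))) 0 := by
  have hP : HasDerivAt (Psi a) (a - (starRingEnd ℂ) a) 0 := hasDerivAt_Psi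
  have hf : HasDerivAt f (deriv f a) (Psi a 0) := by
    rw [Psi_zero]
    exact (hd.differentiableAt (isOpen_UHP.mem_nhds ha)).hasDerivAt
  have hB : HasDerivAt (Bk (f a)) ((f a - (starRingEnd ℂ) (f a))⁻¹) (f (Psi a 0)) := by
    rw [Psi_zero]
    exact hasDerivAt_Bk (hm ha)
  exact hB.comp 0 (hf.comp 0 hP)

lemma abs_deriv_Ff (hm : MapsTo f UHP UHP) (hd : DifferentiableOn ℂ f UHP) (ha : a ∈ UHP) :
    ‖deriv (Ff f a) 0‖
      = ‖deriv f a‖ * a.im / (f a).im := by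
  rw [(hasDerivAt_Ff hm hd ha).deriv]
  rw [norm_mul, norm_mul, norm_inv]
  rw [abs_sub_conj_self (hm ha), abs_sub_conj_self ha]
  have h1 : 0 < (f a).im := hm ha
  have h2 : 0 < a.im := ha
  field_simp

lemma SP_deriv (hm : MapsTo f UHP UHP) (hd : DifferentiableOn ℂ f UHP) (ha : a ∈ UHP) :
    ‖deriv f a‖ ≤ (f a).im / a.im := by
  have h := Complex.norm_deriv_le_div_of_mapsTo_ball (Ff_diff hm hd ha) ((Ff_maps hm ha).mono_right ball_subset_closedBall) one_pos
  rw [abs_deriv_Ff hm hd ha] at h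
  have h1 : 0 < (f a).im := hm ha
  have h2 : 0 < a.im := ha
  rw [div_le_div_iff₀ h1 (by norm_num : (0:ℝ) < 1)] at h
  rw [le_div_iff₀ h2]
  linarith

end SPmach


lemma I_mem_UHP : Complex.I ∈ UHP := by simp [UHP]

/-- Core disc lemma: a function bounded by 1 on the disc vanishing at `β` has
`|g 0| ≤ |β|`. -/
lemma disk_core {g : ℂ → ℂ} (hd : DifferentiableOn ℂ g (ball (0:ℂ) 1))
    (hb : ∀ w ∈ ball (0:ℂ) 1, ‖g w‖ ≤ 1)
    {β : ℂ} (hβ : β ∈ ball (0:ℂ) 1) (hgβ : g β = 0) :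
    ‖g 0‖ ≤ ‖β‖ := by
  rcases eq_or_ne β 0 with rfl | hβ0
  · rw [hgβ]
  set b := Psi Complex.I β with hbdef
  have hbU : b ∈ UHP := Psi_mem_UHP I_mem_UHP hβ
  set A : ℂ → ℂ := fun w => Bk Complex.I (Psi b w) with hAdef
  have hAmaps : ∀ w ∈ ball (0:ℂ) 1, A w ∈ ball (0:ℂ) 1 := fun w hw =>
    Bk_mem_ball I_mem_UHP (Psi_mem_UHP hbU hw)
  have hA0 : A 0 = β := by
    rw [hAdef]; simp only [Psi_zero]; rw [hbdef]; exact Bk_Psi I_mem_UHP hβ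
  set w₀ : ℂ := Bk b Complex.I with hw₀def
  have hw₀ : w₀ ∈ ball (0:ℂ) 1 := Bk_mem_ball hbU I_mem_UHP
  have hAw₀ : A w₀ = 0 := by
    rw [hAdef, hw₀def]
    simp only [Psi_Bk hbU I_mem_UHP]
    exact Bk_self _
  have hw₀abs : ‖w₀‖ = ‖β‖ := by
    rw [hw₀def, abs_Bk_symm, hbdef, Bk_Psi I_mem_UHP hβ]
  have hAdiff : ∀ w ∈ ball (0:ℂ) 1, DifferentiableAt ℂ A w := by
    intro w hw
    exact (differentiableAt_Bk (sub_conj_ne (Psi_mem_UHP hbU hw) I_mem_UHP)).comp w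
      (differentiableAt_Psi hw)
  have hkey : ∀ ε : ℝ, 0 < ε → ε < 1 → (1 - ε) * ‖g 0‖ ≤ ‖β‖ := by
    intro ε hε0 hε1
    set G : ℂ → ℂ := fun w => ((1 - ε : ℝ) : ℂ) * g (A w) with hGdef
    have hGdiff : DifferentiableOn ℂ G (ball (0:ℂ) 1) := by
      intro w hw
      exact (((hd.differentiableAt (isOpen_ball.mem_nhds (hAmaps w hw))).comp w
        (hAdiff w hw)).const_mul _).differentiableWithinAt
    have hG0 : G 0 = 0 := by rw [hGdef]; simp only [hA0, hgβ, mul_zero]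
    have hGmaps : MapsTo G (ball (0:ℂ) 1) (ball (G 0) 1) := by
      intro w hw
      rw [hG0, mem_ball, Complex.dist_eq, sub_zero, hGdef]
      have := hb (A w) (hAmaps w hw)
      rw [norm_mul, Complex.norm_real, Real.norm_eq_abs, abs_of_pos (by linarith : (0:ℝ) < 1 - ε)]
      nlinarith [norm_nonneg (g (A w))]
    have h := Complex.dist_le_div_mul_dist_of_mapsTo_ball hGdiff (hGmaps.mono_right ball_subset_closedBall) hw₀
    rw [hG0, Complex.dist_eq, sub_zero, Complex.dist_eq, sub_zero, hw₀abs] at h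
    have hGw₀ : ‖G w₀‖ = (1 - ε) * ‖g 0‖ := by
      rw [hGdef]
      simp only [hAw₀]
      rw [norm_mul, Complex.norm_real, Real.norm_eq_abs, abs_of_pos (by linarith : (0:ℝ) < 1 - ε)]
    rw [hGw₀] at h
    linarith
  by_contra hcon
  push_neg at hcon
  have h0 : 0 < ‖g 0‖ := lt_of_le_of_lt (norm_nonneg β) hcon
  set ε : ℝ := (‖g 0‖ - ‖β‖) / (2 * ‖g 0‖) with hεdef
  have hε0 : 0 < ε := div_pos (by linarith) (by linarith)
  have hε1 : ε < 1 := by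
    rw [hεdef, div_lt_one (by linarith)]
    have := norm_nonneg β
    linarith
  have hfin := hkey ε hε0 hε1
  have hmul : ε * ‖g 0‖ = (‖g 0‖ - ‖β‖) / 2 := by
    rw [hεdef]; field_simp
  nlinarith

/-- Two-point Schwarz-Pick lemma. -/
lemma TP {f : ℂ → ℂ} {a : ℂ} (hm : MapsTo f UHP UHP) (hd : DifferentiableOn ℂ f UHP)
    (ha : a ∈ UHP) {b : ℂ} (hb : b ∈ UHP) (hfb : f b = f a) (hba : b ≠ a) :
    ‖deriv f a‖ ≤ ((f a).im / a.im) * ‖Bk a b‖ := by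
  set g := dslope (Ff f a) 0 with hgdef
  have hgdiff : DifferentiableOn ℂ g (ball (0:ℂ) 1) :=
    (differentiableOn_dslope (ball_mem_nhds _ one_pos)).2 (Ff_diff hm hd ha)
  have hgb : ∀ w ∈ ball (0:ℂ) 1, ‖g w‖ ≤ 1 := by
    intro w hw
    have := Complex.norm_dslope_le_div_of_mapsTo_ball (Ff_diff hm hd ha) ((Ff_maps hm ha).mono_right ball_subset_closedBall) hw
    simpa using this
  have hβ : Bk a b ∈ ball (0:ℂ) 1 := Bk_mem_ball ha hb
  have hβ0 : Bk a b ≠ 0 := fun h => hba ((Bk_eq_zero ha hb).1 h)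
  have hFfβ : Ff f a (Bk a b) = 0 := by
    rw [Ff, Psi_Bk ha hb, hfb]
    exact Bk_self _
  have hgβ : g (Bk a b) = 0 := by
    rw [hgdef, dslope_of_ne _ hβ0, slope_def_field, hFfβ, Ff_zero]
    simp
  have hcore := disk_core hgdiff hgb hβ hgβ
  have hg0 : g 0 = deriv (Ff f a) 0 := dslope_same _ _
  rw [hg0, abs_deriv_Ff hm hd ha] at hcore
  have h1 : 0 < (f a).im := hm ha
  have h2 : 0 < a.im := ha
  rw [div_le_iff₀ h1] at hcore
  rw [div_mul_eq_mul_div, le_div_iff₀ h2]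
  linarith


lemma rho_nonneg {z w : ℂ} : 0 ≤ rho z w := by
  rw [rho]
  have : 0 ≤ Real.arsinh (‖z - w‖ / (2 * Real.sqrt (z.im * w.im))) := by
    rw [Real.arsinh_nonneg_iff]
    positivity
  linarith

lemma sqrt_im_pos {z w : ℂ} (hz : z ∈ UHP) (hw : w ∈ UHP) :
    0 < Real.sqrt (z.im * w.im) := by
  apply Real.sqrt_pos.2
  exact mul_pos hz hw

lemma sq_C_eq {z w : ℂ} (hz : z ∈ UHP) (hw : w ∈ UHP) :
    ‖z - (starRingEnd ℂ) w‖ ^ 2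
      = ‖z - w‖ ^ 2 + (2 * Real.sqrt (z.im * w.im)) ^ 2 := by
  rw [sq_abs_sub_conj]
  have : Real.sqrt (z.im * w.im) ^ 2 = z.im * w.im :=
    Real.sq_sqrt (le_of_lt (mul_pos hz hw))
  nlinarith [this]

lemma rho_le_of_q {z w u v : ℂ} (hz : z ∈ UHP) (hw : w ∈ UHP) (hu : u ∈ UHP) (hv : v ∈ UHP)
    (h : ‖Bk w z‖ ≤ ‖Bk v u‖) : rho z w ≤ rho u v := by
  rw [rho, rho]
  gcongr 2 * Real.arsinh ?_
  set A := ‖z - w‖ with hA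
  set A' := ‖u - v‖ with hA'
  set C := ‖z - (starRingEnd ℂ) w‖ with hC
  set C' := ‖u - (starRingEnd ℂ) v‖ with hC'
  set P := Real.sqrt (z.im * w.im) with hP
  set Q := Real.sqrt (u.im * v.im) with hQ
  have hPpos : 0 < P := sqrt_im_pos hz hw
  have hQpos : 0 < Q := sqrt_im_pos hu hv
  have hCpos : 0 < C := norm_pos_iff.mpr (sub_conj_ne hz hw)
  have hC'pos : 0 < C' := norm_pos_iff.mpr (sub_conj_ne hu hv)
  have hAnn : 0 ≤ A := norm_nonneg _
  have hA'nn : 0 ≤ A' := norm_nonneg _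
  have hCsq : C ^ 2 = A ^ 2 + (2 * P) ^ 2 := sq_C_eq hz hw
  have hC'sq : C' ^ 2 = A' ^ 2 + (2 * Q) ^ 2 := sq_C_eq hu hv
  have h1 : A * C' ≤ A' * C := by
    rw [Bk, Bk, norm_div, norm_div] at h
    rw [div_le_div_iff₀ hCpos hC'pos] at h
    exact h
  have h2 : (A * Q) ^ 2 ≤ (A' * P) ^ 2 := by
    nlinarith [mul_self_le_mul_self (mul_nonneg hAnn hC'pos.le) h1, hCsq, hC'sq,
      sq_nonneg A, sq_nonneg A']
  have h3 : A * Q ≤ A' * P := by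
    calc A * Q = Real.sqrt ((A * Q) ^ 2) := (Real.sqrt_sq (by positivity)).symm
      _ ≤ Real.sqrt ((A' * P) ^ 2) := Real.sqrt_le_sqrt h2
      _ = A' * P := Real.sqrt_sq (by positivity)
  rw [div_le_div_iff₀ (by positivity) (by positivity)]
  nlinarith [h3]

lemma rho_eq_zero {z w : ℂ} (hz : z ∈ UHP) (hw : w ∈ UHP) (h : rho z w = 0) : z = w := by
  rw [rho] at h
  have h1 : Real.arsinh (‖z - w‖ / (2 * Real.sqrt (z.im * w.im))) = 0 := by
    linarith
  have h2 : ‖z - w‖ / (2 * Real.sqrt (z.im * w.im)) = 0 := by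
    have := congrArg Real.sinh h1
    rwa [Real.sinh_arsinh, Real.sinh_zero] at this
  have hP : 0 < 2 * Real.sqrt (z.im * w.im) := by
    have := sqrt_im_pos hz hw; linarith
  rw [div_eq_zero_iff] at h2
  rcases h2 with h2 | h2
  · exact sub_eq_zero.1 (norm_eq_zero.1 h2)
  · exact absurd h2 (ne_of_gt hP)

lemma q_le_sinh {z w : ℂ} (hz : z ∈ UHP) (hw : w ∈ UHP) :
    ‖Bk w z‖ ≤ Real.sinh (rho z w / 2) := by
  rw [rho]
  rw [show 2 * Real.arsinh (‖z - w‖ / (2 * Real.sqrt (z.im * w.im))) / 2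
      = Real.arsinh (‖z - w‖ / (2 * Real.sqrt (z.im * w.im))) by ring]
  rw [Real.sinh_arsinh]
  rw [Bk, norm_div]
  have hCpos : 0 < ‖z - (starRingEnd ℂ) w‖ := norm_pos_iff.mpr (sub_conj_ne hz hw)
  have hPpos : 0 < 2 * Real.sqrt (z.im * w.im) := by have := sqrt_im_pos hz hw; linarith
  apply div_le_div_of_nonneg_left (norm_nonneg _) hPpos
  have h1 : (2 * Real.sqrt (z.im * w.im)) ^ 2 ≤ ‖z - (starRingEnd ℂ) w‖ ^ 2 := by
    have := sq_C_eq hz hw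
    nlinarith [sq_nonneg (‖z - w‖)]
  calc 2 * Real.sqrt (z.im * w.im)
      = Real.sqrt ((2 * Real.sqrt (z.im * w.im)) ^ 2) := (Real.sqrt_sq (by positivity)).symm
    _ ≤ Real.sqrt (‖z - (starRingEnd ℂ) w‖ ^ 2) := Real.sqrt_le_sqrt h1
    _ = ‖z - (starRingEnd ℂ) w‖ := Real.sqrt_sq (norm_nonneg _)

lemma SP_rho {f : ℂ → ℂ} (hm : MapsTo f UHP UHP) (hd : DifferentiableOn ℂ f UHP)
    {a b : ℂ} (ha : a ∈ UHP) (hb : b ∈ UHP) : rho (f a) (f b) ≤ rho a b :=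
  rho_le_of_q (hm ha) (hm hb) ha hb (SP_q hm hd hb ha)


section Moebius

/-- Real Möbius map. -/
def Tm (a b c d : ℝ) (z : ℂ) : ℂ := ((a:ℂ) * z + b) / ((c:ℂ) * z + d)

lemma Tm_denom_ne {a b c d : ℝ} (h : 0 < a * d - b * c) {z : ℂ} (hz : z ∈ UHP) :
    (c:ℂ) * z + d ≠ 0 := by
  intro heq
  have him : ((c:ℂ) * z + (d:ℂ)).im = 0 := by rw [heq]; simp
  have hre : ((c:ℂ) * z + (d:ℂ)).re = 0 := by rw [heq]; simp
  simp only [Complex.add_im, Complex.add_re, Complex.mul_im, Complex.mul_re,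
    Complex.ofReal_re, Complex.ofReal_im] at him hre
  have hz' : 0 < z.im := hz
  have hc : c = 0 := by
    by_contra hc0
    have : c * z.im ≠ 0 := mul_ne_zero hc0 (ne_of_gt hz')
    apply this
    linarith
  rw [hc] at hre
  have hd : d = 0 := by linarith
  rw [hc, hd] at h
  simp at h

lemma Tm_im {a b c d : ℝ} (h : 0 < a * d - b * c) {z : ℂ} (hz : z ∈ UHP) :
    (Tm a b c d z).im = (a * d - b * c) * z.im / Complex.normSq ((c:ℂ) * z + d) := by
  rw [Tm, Complex.div_im]
  rw [div_sub_div_same]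
  congr 1
  simp only [Complex.add_im, Complex.add_re, Complex.mul_im, Complex.mul_re,
    Complex.ofReal_re, Complex.ofReal_im]
  ring

lemma Tm_maps {a b c d : ℝ} (h : 0 < a * d - b * c) {z : ℂ} (hz : z ∈ UHP) :
    Tm a b c d z ∈ UHP := by
  show 0 < (Tm a b c d z).im
  rw [Tm_im h hz]
  have h1 : 0 < Complex.normSq ((c:ℂ) * z + d) := Complex.normSq_pos.2 (Tm_denom_ne h hz)
  have hz' : 0 < z.im := hz
  positivity

lemma Tm_diff {a b c d : ℝ} (h : 0 < a * d - b * c) :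
    DifferentiableOn ℂ (Tm a b c d) UHP := by
  intro z hz
  have h1 : DifferentiableAt ℂ (fun z : ℂ => (a:ℂ) * z + b) z :=
    (differentiableAt_id.const_mul _).add_const _
  have h2 : DifferentiableAt ℂ (fun z : ℂ => (c:ℂ) * z + d) z :=
    (differentiableAt_id.const_mul _).add_const _
  exact ((h1.div h2 (Tm_denom_ne h hz))).differentiableWithinAt

lemma Tm_det_inv {a b c d : ℝ} (h : 0 < a * d - b * c) : 0 < d * a - (-b) * (-c) := by
  nlinarith

lemma Tm_inv {a b c d : ℝ} (h : 0 < a * d - b * c) {z : ℂ} (hz : z ∈ UHP) :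
    Tm d (-b) (-c) a (Tm a b c d z) = z := by
  have h1 : (c:ℂ) * z + d ≠ 0 := Tm_denom_ne h hz
  have h2 : ((-c : ℝ):ℂ) * Tm a b c d z + (a:ℂ) ≠ 0 :=
    Tm_denom_ne (Tm_det_inv h) (Tm_maps h hz)
  have hdet : ((a:ℂ) * d - b * c) ≠ 0 := by
    intro hc
    have : ((a:ℂ) * d - b * c).re = 0 := by rw [hc]; simp
    simp only [Complex.sub_re, Complex.mul_re, Complex.ofReal_re, Complex.ofReal_im] at this
    simp at this
    linarith
  rw [Tm] at h2
  rw [Tm, Tm, div_eq_iff h2]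
  push_cast
  linear_combination (div_mul_cancel₀ ((a:ℂ) * z + b) h1)

lemma Tm_isom {a b c d : ℝ} (h : 0 < a * d - b * c) {u v : ℂ}
    (hu : u ∈ UHP) (hv : v ∈ UHP) :
    rho (Tm a b c d u) (Tm a b c d v) = rho u v := by
  apply le_antisymm
  · exact SP_rho (fun z hz => Tm_maps h hz) (Tm_diff h) hu hv
  · have h2 := SP_rho (fun z hz => Tm_maps (Tm_det_inv h) hz) (Tm_diff (Tm_det_inv h))
      (Tm_maps h hu) (Tm_maps h hv)
    rwa [Tm_inv h hu, Tm_inv h hv] at h2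

end Moebius

lemma rho_comm (z w : ℂ) : rho z w = rho w z := by
  rw [rho, rho]
  rw [show w - z = -(z - w) by ring, norm_neg, mul_comm w.im z.im]

end PZS

/-- If `φ` is of parabolic zero-step type, the family `𝓕(φ)` of nontrivial solutions of
the forward equation is empty: any solution `σ` is constant on `ℍ`. -/
theorem parabolic_zero_step_forward_equation_only_constant
    (φ p : ℂ → ℂ)
    (hφmaps : Set.MapsTo φ UHP UHP)
    (hφdiff : DifferentiableOn ℂ φ UHP)
    (hφeq : ∀ z ∈ UHP, φ z = z + p z)
    (hpim : ∀ z ∈ UHP, 0 < (p z).im)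
    (hpnt : NTLimZeroAtInf (fun z => p z / z))
    (hzs : ∀ z ∈ UHP,
      Filter.Tendsto (fun n : ℕ => rho (φ^[n] z) (φ^[n + 1] z)) Filter.atTop (nhds 0))
    (σ τ : ℂ → ℂ)
    (hσmaps : Set.MapsTo σ UHP UHP)
    (hσdiff : DifferentiableOn ℂ σ UHP)
    (hτ : IsAutH τ)
    (hστ : ∀ z ∈ UHP, σ (φ z) = τ (σ z)) :
    ∀ z ∈ UHP, ∀ w ∈ UHP, σ z = σ w := by
  obtain ⟨a, b, c, d, hdet, hτf⟩ := hτ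
  have hστ' : ∀ z ∈ UHP, σ (φ z) = PZS.Tm a b c d (σ z) := by
    intro z hz
    rw [hστ z hz, hτf (σ z) (hσmaps hz)]
    rfl
  have hiter_mem : ∀ n : ℕ, Set.MapsTo (φ^[n]) UHP UHP := fun n => hφmaps.iterate n
  have hiter_diff : ∀ n : ℕ, DifferentiableOn ℂ (φ^[n]) UHP := by
    intro n
    induction n with
    | zero => simpa using differentiableOn_id
    | succ n ih =>
      rw [Function.iterate_succ']
      exact hφdiff.comp ih (hiter_mem n)
  -- Step 1 : σ ∘ φ = σ on UHP
  have step1 : ∀ z ∈ UHP, σ (φ z) = σ z := by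
    intro z hz
    have hchain : ∀ n : ℕ, rho (σ (φ^[n] z)) (σ (φ^[n + 1] z)) = rho (σ z) (σ (φ z)) := by
      intro n
      induction n with
      | zero => simp
      | succ n ih =>
        rw [← ih]
        have h1 : φ^[n + 1] z = φ (φ^[n] z) := Function.iterate_succ_apply' φ n z
        have h2 : φ^[n + 1 + 1] z = φ (φ^[n + 1] z) := Function.iterate_succ_apply' φ (n + 1) z
        calc rho (σ (φ^[n + 1] z)) (σ (φ^[n + 1 + 1] z))
            = rho (PZS.Tm a b c d (σ (φ^[n] z))) (PZS.Tm a b c d (σ (φ^[n + 1] z))) := by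
              rw [h2, hστ' _ (hiter_mem (n + 1) hz)]
              congr 2
              rw [h1, hστ' _ (hiter_mem n hz)]
          _ = rho (σ (φ^[n] z)) (σ (φ^[n + 1] z)) :=
              PZS.Tm_isom hdet (hσmaps (hiter_mem n hz)) (hσmaps (hiter_mem (n + 1) hz))
    have hle : ∀ n : ℕ, rho (σ z) (σ (φ z)) ≤ rho (φ^[n] z) (φ^[n + 1] z) := by
      intro n
      rw [← hchain n]
      exact PZS.SP_rho hσmaps hσdiff (hiter_mem n hz) (hiter_mem (n + 1) hz)
    have h0 : rho (σ z) (σ (φ z)) ≤ 0 :=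
      ge_of_tendsto (hzs z hz) (Filter.Eventually.of_forall hle)
    exact (PZS.rho_eq_zero (hσmaps hz) (hσmaps (hφmaps hz))
      (le_antisymm h0 PZS.rho_nonneg)).symm
  have step1n : ∀ n : ℕ, ∀ z ∈ UHP, σ (φ^[n] z) = σ z := by
    intro n
    induction n with
    | zero => intro z _; rfl
    | succ n ih =>
      intro z hz
      rw [Function.iterate_succ_apply' φ n z, step1 _ (hiter_mem n hz), ih z hz]
  -- Step 2 : deriv σ = 0 on UHP
  have step2 : ∀ z ∈ UHP, deriv σ z = 0 := by
    intro z hz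
    have hz' : 0 < z.im := hz
    have hmem : ∀ n : ℕ, φ^[n] z ∈ UHP := fun n => hiter_mem n hz
    have hane : ∀ n : ℕ, φ^[n + 1] z ≠ φ^[n] z := by
      intro n hcon
      have h1 : φ^[n + 1] z = φ^[n] z + p (φ^[n] z) := by
        rw [Function.iterate_succ_apply' φ n z, hφeq _ (hmem n)]
      rw [h1] at hcon
      have h2 : (p (φ^[n] z)).im = 0 := by
        have := congrArg Complex.im hcon
        simp only [Complex.add_im] at this
        linarith
      linarith [hpim _ (hmem n)]
    have hσval : ∀ n : ℕ, σ (φ^[n] z) = σ z := fun n => step1n n z hz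
    have hTP : ∀ n : ℕ, ‖deriv σ (φ^[n] z)‖
        ≤ ((σ z).im / (φ^[n] z).im) * ‖PZS.Bk (φ^[n] z) (φ^[n + 1] z)‖ := by
      intro n
      have h := PZS.TP hσmaps hσdiff (hmem n) (hmem (n + 1))
        (by rw [hσval (n + 1), hσval n]) (hane n)
      rwa [hσval n] at h
    have hchain2 : ∀ n : ℕ, ‖deriv σ z‖
        ≤ ‖deriv σ (φ^[n] z)‖ * ((φ^[n] z).im / z.im) := by
      intro n
      have hEq : Set.EqOn (σ ∘ φ^[n]) σ UHP := fun u hu => step1n n u hu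
      have hev : (σ ∘ φ^[n]) =ᶠ[nhds z] σ := hEq.eventuallyEq_of_mem (PZS.isOpen_UHP.mem_nhds hz)
      have hder : deriv σ z = deriv (σ ∘ φ^[n]) z := (hev.deriv_eq).symm
      have hcomp : deriv (σ ∘ φ^[n]) z = deriv σ (φ^[n] z) * deriv (φ^[n]) z :=
        deriv_comp z (hσdiff.differentiableAt (PZS.isOpen_UHP.mem_nhds (hmem n)))
          ((hiter_diff n).differentiableAt (PZS.isOpen_UHP.mem_nhds hz))
      rw [hder, hcomp, norm_mul]
      have hSP := PZS.SP_deriv (hiter_mem n) (hiter_diff n) hz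
      exact mul_le_mul_of_nonneg_left hSP (norm_nonneg _)
    have hfinal : ∀ n : ℕ, ‖deriv σ z‖
        ≤ ((σ z).im / z.im) * ‖PZS.Bk (φ^[n] z) (φ^[n + 1] z)‖ := by
      intro n
      have him : 0 < (φ^[n] z).im := hmem n
      calc ‖deriv σ z‖
          ≤ ‖deriv σ (φ^[n] z)‖ * ((φ^[n] z).im / z.im) := hchain2 n
        _ ≤ (((σ z).im / (φ^[n] z).im) * ‖PZS.Bk (φ^[n] z) (φ^[n + 1] z)‖)
              * ((φ^[n] z).im / z.im) :=
            mul_le_mul_of_nonneg_right (hTP n) (by positivity)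
        _ = ((σ z).im / z.im) * ‖PZS.Bk (φ^[n] z) (φ^[n + 1] z)‖ := by
            field_simp
            try ring
    have hq0 : Filter.Tendsto
        (fun n : ℕ => ‖PZS.Bk (φ^[n] z) (φ^[n + 1] z)‖) Filter.atTop (nhds 0) := by
      have hsinh : Filter.Tendsto
          (fun n : ℕ => Real.sinh (rho (φ^[n + 1] z) (φ^[n] z) / 2)) Filter.atTop (nhds 0) := by
        have h1 : Filter.Tendsto (fun n : ℕ => rho (φ^[n + 1] z) (φ^[n] z) / 2)
            Filter.atTop (nhds 0) := by
          have h2 : (fun n : ℕ => rho (φ^[n + 1] z) (φ^[n] z) / 2)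
              = fun n : ℕ => rho (φ^[n] z) (φ^[n + 1] z) / 2 := by
            funext n; rw [PZS.rho_comm]
          rw [h2]
          simpa using (hzs z hz).div_const 2
        have := (Real.continuous_sinh.tendsto 0).comp h1
        simpa [Function.comp_def] using this
      apply squeeze_zero (fun n => norm_nonneg _) _ hsinh
      intro n
      exact PZS.q_le_sinh (hmem (n + 1)) (hmem n)
    have hlim : Filter.Tendsto
        (fun n : ℕ => ((σ z).im / z.im) * ‖PZS.Bk (φ^[n] z) (φ^[n + 1] z)‖)
        Filter.atTop (nhds 0) := by
      simpa using hq0.const_mul ((σ z).im / z.im)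
    have habs : ‖deriv σ z‖ ≤ 0 :=
      ge_of_tendsto hlim (Filter.Eventually.of_forall hfinal)
    exact norm_eq_zero.1 (le_antisymm habs (norm_nonneg _))
  -- Conclusion via the mean value inequality on the convex set UHP
  intro z hz w hw
  have hbound : ∀ x ∈ UHP, HasFDerivWithinAt σ (0 : ℂ →L[ℝ] ℂ) UHP x := by
    intro x hx
    have h1 : HasDerivAt σ (deriv σ x) x :=
      (hσdiff.differentiableAt (PZS.isOpen_UHP.mem_nhds hx)).hasDerivAt
    rw [step2 x hx] at h1
    have h2 : HasFDerivAt σ (0 : ℂ →L[ℂ] ℂ) x := by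
      have h5 := h1.hasFDerivAt
      have h6 : (ContinuousLinearMap.toSpanSingleton ℂ (0 : ℂ)) = (0 : ℂ →L[ℂ] ℂ) := by
        ext y; simp
      rwa [h6] at h5
    have h3 := h2.restrictScalars ℝ
    have h4 : ((0 : ℂ →L[ℂ] ℂ).restrictScalars ℝ) = (0 : ℂ →L[ℝ] ℂ) := by
      ext x
      simp
    rw [h4] at h3
    exact h3.hasFDerivWithinAt
  have h : ‖σ z - σ w‖ ≤ 0 * ‖z - w‖ :=
    PZS.convex_UHP.norm_image_sub_le_of_norm_hasFDerivWithin_le hbound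
      (fun x _ => norm_zero.le) hw hz
  rw [zero_mul] at h
  have : σ z - σ w = 0 := by
    have := norm_le_zero_iff.1 h
    exact this
  linear_combination this
end
end

section
/- Let φ be of non-zero-step type with classical semiconjugation (g, α) as in the context. Then g is canonical: for all z, w ∈ ℍ, z and w lie in the same grand orbit of φ (i.e. there exist n, k ≥ 0 with φ_n(z) = φ_k(w)) if and only if g(z) and g(w) lie in the same grand orbit of α (i.e. there exists m ∈ ℤ with g(z) = α_m(g(w)), where α_m is the m-th iterate of the automorphism α); moreover, for every ζ ∈ ℍ there exist z ∈ ℍ and m ∈ ℤ with α_m(ζ) = g(z). -/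
open Complex Filter Set Topology

noncomputable section

/-- The affine automorphism `z ↦ A z + b` of `ℂ` (with `A` real nonzero), as an `Equiv.Perm ℂ`,
so that its `ℤ`-iterates are given by `zpow`. -/
noncomputable def affineEquivH (A b : ℝ) (hA : A ≠ 0) : Equiv.Perm ℂ where
  toFun z := (A : ℂ) * z + (b : ℂ)
  invFun z := (z - (b : ℂ)) / (A : ℂ)
  left_inv z := by
    have hA' : (A : ℂ) ≠ 0 := Complex.ofReal_ne_zero.mpr hA
    field_simp
    ring
  right_inv z := by
    have hA' : (A : ℂ) ≠ 0 := Complex.ofReal_ne_zero.mpr hA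
    field_simp
    ring

open Metric
open scoped NNReal ENNReal

lemma isOpen_UHP : IsOpen UHP := isOpen_lt continuous_const Complex.continuous_im

lemma preconnected_UHP : IsPreconnected UHP := (convex_halfSpace_im_gt 0).isPreconnected

lemma I_mem_UHP : Complex.I ∈ UHP := by simp [UHP]

/-- Hurwitz-type existence of zeros via the maximum modulus principle. -/
lemma exists_zero_of_close {F : ℂ → ℂ} {c : ℂ} {ε δ : ℝ} (hε : 0 < ε) (hδ : 0 < δ)
    (hF : ∀ u ∈ closedBall c ε, DifferentiableAt ℂ F u)
    (hsph : ∀ u ∈ sphere c ε, δ ≤ ‖F u‖)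
    (hcen : ‖F c‖ < δ) : ∃ u ∈ closedBall c ε, F u = 0 := by
  by_contra h
  push_neg at h
  set f : ℂ → ℂ := fun u => (F u)⁻¹ with hf
  have hdc : DiffContOnCl ℂ f (ball c ε) := by
    constructor
    · intro u hu
      have hu' : u ∈ closedBall c ε := ball_subset_closedBall hu
      exact ((hF u hu').inv (h u hu')).differentiableWithinAt
    · rw [closure_ball c hε.ne']
      intro u hu
      exact ((hF u hu).continuousAt.continuousWithinAt).inv₀ (h u hu)
  have hfr : ∀ u ∈ frontier (ball c ε), ‖f u‖ ≤ δ⁻¹ := by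
    rw [frontier_ball c hε.ne']
    intro u hu
    have h1 : δ ≤ ‖F u‖ := hsph u hu
    simp only [hf, norm_inv]
    exact inv_anti₀ hδ h1
  have hcc : c ∈ closure (ball c ε) := by
    rw [closure_ball c hε.ne']
    exact mem_closedBall_self hε.le
  have := Complex.norm_le_of_forall_mem_frontier_norm_le isBounded_ball hdc hfr hcc
  have hFc : F c ≠ 0 := h c (mem_closedBall_self hε.le)
  have h2 : (0:ℝ) < ‖F c‖ := norm_pos_iff.mpr hFc
  simp only [hf, norm_inv] at this
  have h4 : δ⁻¹ < ‖F c‖⁻¹ := by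
    exact inv_strictAnti₀ h2 hcen
  linarith

def cay (u : ℂ) : ℂ := (u - Complex.I) / (u + Complex.I)

def cayInv (v : ℂ) : ℂ := Complex.I * (1 + v) / (1 - v)

lemma add_I_ne_zero {u : ℂ} (hu : u ∈ UHP) : u + Complex.I ≠ 0 := by
  intro h
  have : (u + Complex.I).im = 0 := by rw [h]; simp
  simp only [Complex.add_im, Complex.I_im] at this
  have hu' : 0 < u.im := hu
  linarith

lemma cay_mem_ball {u : ℂ} (hu : u ∈ UHP) : cay u ∈ ball (0:ℂ) 1 := by
  have hu' : 0 < u.im := hu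
  have h1 : ‖u - Complex.I‖ < ‖u + Complex.I‖ := by
    have e1 : Complex.normSq (u - Complex.I) < Complex.normSq (u + Complex.I) := by
      simp only [Complex.normSq_apply, Complex.add_re, Complex.add_im, Complex.sub_re,
        Complex.sub_im, Complex.I_re, Complex.I_im]
      nlinarith
    have := Real.sqrt_lt_sqrt (Complex.normSq_nonneg _) e1
    simpa [Complex.norm_def] using this
  rw [mem_ball_zero_iff]
  calc ‖cay u‖ = ‖u - Complex.I‖ / ‖u + Complex.I‖ := by
        simp [cay, map_div₀]
    _ < 1 := by
        rw [div_lt_one (lt_of_le_of_lt (norm_nonneg _) h1)]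
        exact h1

lemma cayInv_mem_UHP {v : ℂ} (hv : v ∈ ball (0:ℂ) 1) : cayInv v ∈ UHP := by
  have hv1 : ‖v‖ < 1 := by rwa [mem_ball_zero_iff] at hv
  have hd : (1 - v) ≠ 0 := by
    intro h
    have : v = 1 := by linear_combination -h
    rw [this] at hv1; simp at hv1
  show 0 < (cayInv v).im
  have hns : Complex.normSq v < 1 := by
    rw [← Complex.sq_norm]; nlinarith [norm_nonneg v]
  have hns2 : 0 < Complex.normSq (1 - v) := by
    rwa [Complex.normSq_pos]
  rw [cayInv, Complex.div_im]
  have h1 : (Complex.I * (1 + v)).re = -v.im := by simp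
  have h2 : (Complex.I * (1 + v)).im = 1 + v.re := by simp
  have h3 : (1 - v).re = 1 - v.re := by simp
  have h4 : (1 - v).im = -v.im := by simp
  rw [h1, h2, h3, h4]
  rw [div_sub_div_same, lt_div_iff₀ hns2]
  simp only [Complex.normSq_apply, Complex.sub_re, Complex.sub_im, Complex.one_re,
    Complex.one_im, Complex.normSq_apply] at hns ⊢
  nlinarith

lemma cayInv_cay {u : ℂ} (hu : u ∈ UHP) : cayInv (cay u) = u := by
  have h0 : u + Complex.I ≠ 0 := add_I_ne_zero hu
  have h1 : 1 - cay u = 2 * Complex.I / (u + Complex.I) := by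
    rw [cay]; field_simp; ring
  have h2 : 1 - cay u ≠ 0 := by
    rw [h1]
    exact div_ne_zero (by simp [Complex.ext_iff]) h0
  rw [cayInv, cay] at *
  field_simp at h2 ⊢
  ring

lemma cay_I : cay Complex.I = 0 := by simp [cay]

lemma cayInv_zero : cayInv 0 = Complex.I := by simp [cayInv]

lemma diffAt_cay {u : ℂ} (hu : u ∈ UHP) : DifferentiableAt ℂ cay u := by
  apply DifferentiableAt.div
  · fun_prop
  · fun_prop
  · exact add_I_ne_zero hu

lemma diffAt_cayInv {v : ℂ} (hv : v ∈ ball (0:ℂ) 1) : DifferentiableAt ℂ cayInv v := by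
  have hv1 : ‖v‖ < 1 := by rwa [mem_ball_zero_iff] at hv
  have hd : (1 - v) ≠ 0 := by
    intro h
    have : v = 1 := by linear_combination -h
    rw [this] at hv1; simp at hv1
  apply DifferentiableAt.div
  · fun_prop
  · fun_prop
  · exact hd

/-- Schwarz lemma transplanted to the upper half-plane with fixed point `I`. -/
lemma selfmap_cay_bound {F : ℂ → ℂ} (hd : DifferentiableOn ℂ F UHP)
    (hm : MapsTo F UHP UHP) (hfix : F Complex.I = Complex.I)
    {w : ℂ} (hw : w ∈ UHP) : ‖cay (F w)‖ ≤ ‖cay w‖ := by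
  set Ψ : ℂ → ℂ := fun v => cay (F (cayInv v)) with hΨ
  have hd' : DifferentiableOn ℂ Ψ (ball (0:ℂ) 1) := by
    intro v hv
    have h1 : DifferentiableAt ℂ cayInv v := diffAt_cayInv hv
    have h2 : cayInv v ∈ UHP := cayInv_mem_UHP hv
    have h3 : DifferentiableAt ℂ F (cayInv v) :=
      (hd (cayInv v) h2).differentiableAt (isOpen_UHP.mem_nhds h2)
    have h4 : DifferentiableAt ℂ cay (F (cayInv v)) := diffAt_cay (hm h2)
    exact ((h4.comp _ h3).comp _ h1).differentiableWithinAt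
  have hmaps : MapsTo Ψ (ball (0:ℂ) 1) (ball (0:ℂ) 1) := by
    intro v hv
    exact cay_mem_ball (hm (cayInv_mem_UHP hv))
  have h0 : Ψ 0 = 0 := by
    simp only [hΨ, cayInv_zero, hfix, cay_I]
  have hcw : ‖cay w‖ < 1 := by
    have := cay_mem_ball hw; rwa [mem_ball_zero_iff] at this
  have := Complex.norm_le_norm_of_mapsTo_ball hd' (hmaps.mono_right ball_subset_closedBall) h0 hcw
  simp only [hΨ] at this
  rwa [cayInv_cay hw] at this

/-- From a bound on the Cayley transform, a Euclidean bound on distance to `I`. -/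
lemma bound_from_cay {v : ℂ} (hv : v ∈ UHP) {κ : ℝ} (hκ : ‖cay v‖ ≤ κ)
    (hκ1 : κ < 1) : ‖v - Complex.I‖ ≤ 2 * κ / (1 - κ) := by
  have h0 : v + Complex.I ≠ 0 := add_I_ne_zero hv
  have h1 : ‖v - Complex.I‖ = ‖cay v‖ * ‖v + Complex.I‖ := by
    rw [cay, norm_div, div_mul_cancel₀]
    exact norm_ne_zero_iff.mpr h0
  have h2 : ‖v + Complex.I‖ ≤ ‖v - Complex.I‖ + 2 := by
    calc ‖v + Complex.I‖ = ‖(v - Complex.I) + 2 * Complex.I‖ := by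
          ring_nf
      _ ≤ ‖v - Complex.I‖ + ‖2 * Complex.I‖ := norm_add_le _ _
      _ = ‖v - Complex.I‖ + 2 := by simp
  have hκ0 : 0 ≤ κ := le_trans (norm_nonneg _) hκ
  have h3 : ‖v - Complex.I‖ ≤ κ * (‖v - Complex.I‖ + 2) := by
    calc ‖v - Complex.I‖
        = ‖cay v‖ * ‖v + Complex.I‖ := h1
      _ ≤ κ * (‖v - Complex.I‖ + 2) := by
          apply mul_le_mul hκ h2 (norm_nonneg _) hκ0
  rw [le_div_iff₀ (by linarith)]
  nlinarith [norm_nonneg (v - Complex.I)]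

open scoped Real in
/-- Bound on Cauchy power series coefficients from a sup bound on the circle. -/
lemma cauchy_coeff_bound {f : ℂ → ℂ} {c : ℂ} {R : ℝ} (hR : 0 < R) {M : ℝ}
    (hf : ContinuousOn f (sphere c R)) (hM : ∀ u ∈ sphere c R, ‖f u‖ ≤ M) (n : ℕ) :
    ‖cauchyPowerSeries f c R n‖ ≤ M / R ^ n := by
  obtain ⟨u₀, hu₀⟩ : (sphere c R).Nonempty := NormedSpace.sphere_nonempty.mpr hR.le
  have h0M : 0 ≤ M := le_trans (norm_nonneg _) (hM u₀ hu₀)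
  have key := norm_cauchyPowerSeries_le f c R n
  have hcont : Continuous fun θ : ℝ => ‖f (circleMap c R θ)‖ :=
    (hf.comp_continuous (continuous_circleMap c R)
      (fun θ => circleMap_mem_sphere c hR.le θ)).norm
  have hint : (∫ θ : ℝ in (0)..2 * π, ‖f (circleMap c R θ)‖) ≤ 2 * π * M := by
    have h1 : (∫ θ : ℝ in (0)..2 * π, ‖f (circleMap c R θ)‖) ≤
        ∫ _ : ℝ in (0)..2 * π, M := by
      apply intervalIntegral.integral_mono_on Real.two_pi_pos.le
        (hcont.intervalIntegrable _ _) intervalIntegrable_const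
      intro x _
      exact hM _ (circleMap_mem_sphere c hR.le x)
    simpa using h1
  have habs : |R| = R := abs_of_pos hR
  calc ‖cauchyPowerSeries f c R n‖
      ≤ ((2 * π)⁻¹ * ∫ θ : ℝ in (0)..2 * π, ‖f (circleMap c R θ)‖) * |R|⁻¹ ^ n := key
    _ ≤ ((2 * π)⁻¹ * (2 * π * M)) * |R|⁻¹ ^ n := by
        apply mul_le_mul_of_nonneg_right _ (by positivity)
        apply mul_le_mul_of_nonneg_left hint (by positivity)
    _ = M / R ^ n := by
        rw [habs]
        field_simp
        rw [one_div, inv_pow, inv_mul_cancel_right₀ (pow_ne_zero _ hR.ne')]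

/-- Propagation of smallness for uniformly bounded analytic functions. -/
lemma prop_small {c : ℂ} {R r M : ℝ} (hr : 0 < r) (hrR : r ≤ R / 4) (hM : 0 < M)
    {ε : ℝ} (hε : 0 < ε) :
    ∃ η > 0, ∀ F : ℂ → ℂ, DifferentiableOn ℂ F (closedBall c R) →
      (∀ u ∈ closedBall c R, ‖F u‖ ≤ M) → (∀ u ∈ closedBall c r, ‖F u‖ ≤ η) →
      ∀ u ∈ closedBall c (R / 2), ‖F u‖ ≤ ε := by
  have hR : 0 < R := by linarith
  obtain ⟨k, hk⟩ : ∃ k : ℕ, ((2:ℝ)/3) ^ k < ε / (6 * M) :=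
    exists_pow_lt_of_lt_one (by positivity) (by norm_num)
  have hk' : 3 * M * ((2:ℝ)/3) ^ k < ε / 2 := by
    have := (mul_lt_mul_of_pos_left hk (by positivity : (0:ℝ) < 3 * M))
    calc 3 * M * ((2:ℝ)/3) ^ k < 3 * M * (ε / (6 * M)) := this
      _ = ε / 2 := by field_simp; ring
  set B : ℝ := max 1 (R / (2 * r)) with hB
  have hB1 : (1:ℝ) ≤ B := le_max_left _ _
  set Ck : ℝ := (k : ℝ) * B ^ k + 1 with hCk
  have hCk0 : 0 < Ck := by positivity
  refine ⟨min 1 (ε / (2 * Ck)), by positivity, ?_⟩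
  intro F hFd hFM hFη u hu
  set η : ℝ := min 1 (ε / (2 * Ck)) with hη
  have hη0 : 0 < η := by positivity
  -- power series at radius 3R/4 and at radius r
  obtain ⟨R', hR'⟩ : ∃ t : ℝ, t = 3 * R / 4 := ⟨_, rfl⟩
  have hR'0 : 0 < R' := by rw [hR']; positivity
  have hsub1 : closedBall c R' ⊆ closedBall c R :=
    closedBall_subset_closedBall (by linarith)
  have hsubr : closedBall c r ⊆ closedBall c R :=
    closedBall_subset_closedBall (by linarith)
  have hcoeR : ((R'.toNNReal : ℝ≥0) : ℝ) = R' := Real.coe_toNNReal _ hR'0.le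
  have hcoer : ((r.toNNReal : ℝ≥0) : ℝ) = r := Real.coe_toNNReal _ hr.le
  have hd1 : DifferentiableOn ℂ F (closedBall c ((R'.toNNReal : ℝ≥0) : ℝ)) := by
    rw [hcoeR]; exact hFd.mono hsub1
  have hdr : DifferentiableOn ℂ F (closedBall c ((r.toNNReal : ℝ≥0) : ℝ)) := by
    rw [hcoer]; exact hFd.mono hsubr
  have hp : HasFPowerSeriesOnBall F (cauchyPowerSeries F c R'.toNNReal) c R'.toNNReal :=
    hd1.hasFPowerSeriesOnBall (Real.toNNReal_pos.mpr hR'0)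
  have hq : HasFPowerSeriesOnBall F (cauchyPowerSeries F c r.toNNReal) c r.toNNReal :=
    hdr.hasFPowerSeriesOnBall (Real.toNNReal_pos.mpr hr)
  set p := cauchyPowerSeries F c R'.toNNReal with hpdef
  have hpq : p = cauchyPowerSeries F c r.toNNReal :=
    hp.hasFPowerSeriesAt.eq_formalMultilinearSeries hq.hasFPowerSeriesAt
  -- coefficient bounds
  have hpn : ∀ n, ‖p n‖ ≤ M / R' ^ n := by
    intro n
    have h := cauchy_coeff_bound (f := F) (c := c) (R := ((R'.toNNReal : ℝ≥0) : ℝ))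
      (by rw [hcoeR]; exact hR'0) (M := M)
      (by rw [hcoeR]; exact hFd.continuousOn.mono (sphere_subset_closedBall.trans hsub1))
      (by rw [hcoeR]; exact fun u hu' => hFM u (hsub1 (sphere_subset_closedBall hu'))) n
    rw [hcoeR] at h
    have hps : p = cauchyPowerSeries F c R' := by rw [hpdef, hcoeR]
    rw [hps]
    exact h
  have hqn : ∀ n, ‖p n‖ ≤ η / r ^ n := by
    intro n
    rw [hpq]
    have h := cauchy_coeff_bound (f := F) (c := c) (R := ((r.toNNReal : ℝ≥0) : ℝ))
      (by rw [hcoer]; exact hr) (M := η)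
      (by rw [hcoer]; exact hFd.continuousOn.mono (sphere_subset_closedBall.trans hsubr))
      (by rw [hcoer]; exact fun u hu' => hFη u (sphere_subset_closedBall hu')) n
    rw [hcoer] at h
    have hqs : cauchyPowerSeries F c ((r.toNNReal : ℝ≥0) : ℝ) = cauchyPowerSeries F c r := by
      rw [hcoer]
    rw [hqs]
    exact h
  -- expansion at u
  set y : ℂ := u - c with hy
  have hynorm : ‖y‖ ≤ R / 2 := by
    rw [hy, ← dist_eq_norm]
    exact mem_closedBall.mp hu
  have hymem : y ∈ Metric.eball (0:ℂ) (R'.toNNReal : ℝ≥0∞) := by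
    rw [EMetric.mem_ball, edist_eq_enorm_sub, sub_zero, enorm_eq_nnnorm, ENNReal.coe_lt_coe, ← NNReal.coe_lt_coe,
      coe_nnnorm, hcoeR, hR']
    linarith
  have hsum := hp.hasSum hymem
  set S : ℕ → ℂ := fun n => p n (fun _ => y) with hS
  have hFu : F u = F (c + y) := by rw [hy]; congr 1; ring
  have hterm : ∀ n, ‖S n‖ ≤ ‖p n‖ * ‖y‖ ^ n := by
    intro n
    calc ‖p n fun _ => y‖ ≤ ‖p n‖ * ∏ _i : Fin n, ‖y‖ := (p n).le_opNorm _
      _ = ‖p n‖ * ‖y‖ ^ n := by rw [Finset.prod_const]; simp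
  have hyR : ‖y‖ / R' ≤ 2/3 := by
    rw [div_le_iff₀ hR'0, hR']
    linarith
  have htail_term : ∀ n, ‖S (n + k)‖ ≤ M * ((2:ℝ)/3) ^ (n + k) := by
    intro n
    calc ‖S (n + k)‖ ≤ ‖p (n + k)‖ * ‖y‖ ^ (n + k) := hterm _
      _ ≤ (M / R' ^ (n + k)) * ‖y‖ ^ (n + k) :=
          mul_le_mul_of_nonneg_right (hpn _) (by positivity)
      _ = M * (‖y‖ / R') ^ (n + k) := by
          rw [div_pow, div_mul_eq_mul_div, mul_div_assoc]
      _ ≤ M * ((2:ℝ)/3) ^ (n + k) := by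
          apply mul_le_mul_of_nonneg_left _ hM.le
          exact pow_le_pow_left₀ (by positivity) hyR _
  have hgeo : HasSum (fun n : ℕ => M * ((2:ℝ)/3) ^ (n + k)) (M * ((2:ℝ)/3) ^ k * 3) := by
    have h1 : HasSum (fun n : ℕ => ((2:ℝ)/3) ^ n) 3 := by
      have h0 := hasSum_geometric_of_lt_one (by norm_num : (0:ℝ) ≤ 2/3) (by norm_num)
      norm_num at h0
      exact h0
    have h2 := h1.mul_left (M * ((2:ℝ)/3) ^ k)
    have e : (fun n : ℕ => M * ((2:ℝ)/3) ^ (n + k)) = fun i => M * ((2:ℝ)/3) ^ k * ((2:ℝ)/3) ^ i := by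
      funext n
      rw [pow_add]; ring
    rw [e]; exact h2
  have htail : ‖∑' n : ℕ, S (n + k)‖ ≤ M * ((2:ℝ)/3) ^ k * 3 :=
    tsum_of_norm_bounded hgeo htail_term
  have hbn : ‖y‖ / r ≤ B := by
    calc ‖y‖ / r ≤ (R/2) / r := by gcongr
      _ = R / (2*r) := by rw [div_div]
      _ ≤ B := le_max_right _ _
  have hpart : ‖∑ n ∈ Finset.range k, S n‖ ≤ η * Ck := by
    have hCkeq : η * Ck = (k:ℝ) * (η * B ^ k) + η := by rw [hCk]; ring
    calc ‖∑ n ∈ Finset.range k, S n‖ ≤ ∑ n ∈ Finset.range k, ‖S n‖ := norm_sum_le _ _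
      _ ≤ ∑ _n ∈ Finset.range k, η * B ^ k := by
          apply Finset.sum_le_sum
          intro n hn
          calc ‖S n‖ ≤ ‖p n‖ * ‖y‖ ^ n := hterm n
            _ ≤ (η / r ^ n) * ‖y‖ ^ n :=
                mul_le_mul_of_nonneg_right (hqn n) (by positivity)
            _ = η * (‖y‖ / r) ^ n := by rw [div_pow]; ring
            _ ≤ η * B ^ k := by
                apply mul_le_mul_of_nonneg_left _ hη0.le
                calc (‖y‖ / r) ^ n ≤ B ^ n := pow_le_pow_left₀ (by positivity) hbn _
                  _ ≤ B ^ k := pow_le_pow_right₀ hB1 (Finset.mem_range.mp hn).le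
      _ = (k:ℝ) * (η * B ^ k) := by
          rw [Finset.sum_const, Finset.card_range]; simp
      _ ≤ η * Ck := by rw [hCkeq]; linarith
  have hdecomp : ∑ n ∈ Finset.range k, S n + ∑' n : ℕ, S (n + k) = ∑' n : ℕ, S n :=
    hsum.summable.sum_add_tsum_nat_add k
  have hfinal : ‖F u‖ ≤ η * Ck + M * ((2:ℝ)/3) ^ k * 3 := by
    rw [hFu, ← hsum.tsum_eq, ← hdecomp]
    exact le_trans (norm_add_le _ _) (add_le_add hpart htail)
  have hη2 : η * Ck ≤ ε / 2 := by
    have h1 : η ≤ ε / (2 * Ck) := min_le_right _ _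
    calc η * Ck ≤ (ε / (2 * Ck)) * Ck := mul_le_mul_of_nonneg_right h1 hCk0.le
      _ = ε / 2 := by field_simp
  have h32 : M * ((2:ℝ)/3) ^ k * 3 ≤ ε / 2 := by linarith [hk']
  linarith


/-- The classical semiconjugation `g` is canonical: it induces a bijection between the
grand orbits of `φ` and the grand orbits of the automorphism `α(z) = Az + b`. -/
theorem classical_semiconjugation_is_canonical
    (φ p g : ℂ → ℂ) (A b : ℝ) (z₀ : ℂ)
    (hz₀ : z₀ ∈ UHP)
    (hφmaps : Set.MapsTo φ UHP UHP)
    (hφdiff : DifferentiableOn ℂ φ UHP)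
    (hφnotaut : ¬ IsAutH φ)
    (hA : 1 ≤ A)
    (hφeq : ∀ z ∈ UHP, φ z = (A : ℂ) * z + p z)
    (hpim : ∀ z ∈ UHP, 0 < (p z).im)
    (hpnt : NTLimZeroAtInf (fun z => p z / z))
    (hnzs : 1 < A ∨ (A = 1 ∧ ∃ s : ℝ, 0 < s ∧
      Filter.Tendsto (fun n : ℕ => rho (φ^[n] z₀) (φ^[n + 1] z₀)) Filter.atTop (nhds s)))
    (hgmaps : Set.MapsTo g UHP UHP)
    (hgdiff : DifferentiableOn ℂ g UHP)
    (hgz₀ : g z₀ = Complex.I)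
    (hglim : TendstoLocallyUniformlyOn
      (fun (n : ℕ) (z : ℂ) => (φ^[n] z - ((φ^[n] z₀).re : ℂ)) / ((φ^[n] z₀).im : ℂ))
      g Filter.atTop UHP)
    (hgconj : ∀ z ∈ UHP, g (φ z) = (A : ℂ) * g z + (b : ℂ))
    (hblim : Filter.Tendsto
      (fun n : ℕ => ((φ^[n + 1] z₀).re - (φ^[n] z₀).re) / (φ^[n] z₀).im)
      Filter.atTop (nhds b))
    (hbne : A = 1 → b ≠ 0)
 :
    (∀ z ∈ UHP, ∀ w ∈ UHP,
      ((∃ n k : ℕ, φ^[n] z = φ^[k] w) ↔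
        (∃ m : ℤ, g z = ((affineEquivH A b (zero_lt_one.trans_le hA).ne') ^ m) (g w)))) ∧
    (∀ ζ ∈ UHP, ∃ z ∈ UHP, ∃ m : ℤ,
      ((affineEquivH A b (zero_lt_one.trans_le hA).ne') ^ m) ζ = g z) := by
  have hA0 : (0:ℝ) < A := lt_of_lt_of_le one_pos hA
  set E : Equiv.Perm ℂ := affineEquivH A b (zero_lt_one.trans_le hA).ne' with hE
  have hEapp : ∀ u : ℂ, E u = (A:ℂ) * u + (b:ℂ) := fun u => rfl
  have hEsymmapp : ∀ u : ℂ, E.symm u = (u - (b:ℂ)) / (A:ℂ) := fun u => rfl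
  -- iterates of φ remain in the upper half-plane
  have hiter : ∀ n : ℕ, ∀ z ∈ UHP, φ^[n] z ∈ UHP := by
    intro n
    induction n with
    | zero => intro z hz; simpa using hz
    | succ n ih =>
      intro z hz
      rw [Function.iterate_succ_apply']
      exact hφmaps (ih z hz)
  have hy : ∀ n : ℕ, 0 < (φ^[n] z₀).im := fun n => hiter n z₀ hz₀
  have hyne : ∀ n : ℕ, ((φ^[n] z₀).im : ℂ) ≠ 0 :=
    fun n => Complex.ofReal_ne_zero.mpr (hy n).ne'
  have hφiterdiff : ∀ n : ℕ, DifferentiableOn ℂ (φ^[n]) UHP := by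
    intro n
    induction n with
    | zero => simpa using differentiableOn_id
    | succ n ih =>
      rw [Function.iterate_succ']
      exact hφdiff.comp ih (fun z hz => hiter n z hz)
  -- semiconjugation for iterates
  have hconj : ∀ k : ℕ, ∀ z ∈ UHP, g (φ^[k] z) = (E ^ k) (g z) := by
    intro k
    induction k with
    | zero => intro z hz; simp
    | succ k ih =>
      intro z hz
      rw [Function.iterate_succ_apply', hgconj _ (hiter k z hz), pow_succ',
        Equiv.Perm.mul_apply, ← ih z hz, hEapp]
  -- normalized iterates
  set gn : ℕ → ℂ → ℂ :=
    fun n u => (φ^[n] u - ((φ^[n] z₀).re : ℂ)) / ((φ^[n] z₀).im : ℂ) with hgn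
  have hgnz₀ : ∀ n : ℕ, gn n z₀ = Complex.I := by
    intro n
    rw [hgn]
    simp only []
    rw [div_eq_iff (hyne n)]
    have h1 := Complex.re_add_im (φ^[n] z₀)
    linear_combination -h1
  have hgn_eq : ∀ n : ℕ, ∀ u : ℂ,
      ((φ^[n] z₀).re : ℂ) + gn n u * ((φ^[n] z₀).im : ℂ) = φ^[n] u := by
    intro n u
    rw [hgn]
    field_simp [hyne n]
    ring
  have hgn_diff : ∀ n : ℕ, DifferentiableOn ℂ (gn n) UHP := by
    intro n
    rw [hgn]
    exact ((hφiterdiff n).sub_const _).div_const _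
  have hunif : ∀ K ⊆ UHP, IsCompact K → TendstoUniformlyOn gn g atTop K :=
    (tendstoLocallyUniformlyOn_iff_forall_isCompact isOpen_UHP).mp hglim
  have hpt : ∀ u ∈ UHP, Tendsto (fun n => gn n u) atTop (𝓝 (g u)) :=
    fun u hu => hglim.tendsto_at hu
  -- nonconstancy of g
  have hφz₀ : φ z₀ ∈ UHP := hφmaps hz₀
  have hgφz₀ : g (φ z₀) = (A:ℂ) * Complex.I + (b:ℂ) := by
    rw [hgconj z₀ hz₀, hgz₀]
  have hneval : g (φ z₀) ≠ g z₀ := by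
    rw [hgφz₀, hgz₀]
    intro h
    have him := congrArg Complex.im h
    have hre := congrArg Complex.re h
    simp only [Complex.add_im, Complex.mul_im, Complex.ofReal_re, Complex.ofReal_im,
      Complex.I_im, Complex.I_re, Complex.add_re, Complex.mul_re] at him hre
    have hA1 : A = 1 := by linarith
    have hb0 : b = 0 := by linarith
    exact hbne hA1 hb0
  have hgan : AnalyticOnNhd ℂ g UHP := hgdiff.analyticOnNhd isOpen_UHP
  -- isolated values of g
  have hiso : ∀ z ∈ UHP, ∃ ε > 0, closedBall z ε ⊆ UHP ∧
      ∀ u ∈ closedBall z ε, g u = g z → u = z := by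
    intro z hz
    have han : AnalyticAt ℂ (fun u => g u - g z) z := (hgan z hz).sub analyticAt_const
    rcases han.eventually_eq_zero_or_eventually_ne_zero with h0 | h1
    · exfalso
      have heq : EqOn (fun u => g u - g z) 0 UHP :=
        (hgan.sub analyticOnNhd_const).eqOn_zero_of_preconnected_of_eventuallyEq_zero
          preconnected_UHP hz h0
      have e1 : g z₀ = g z := by
        have := heq hz₀; simpa [sub_eq_zero] using this
      have e2 : g (φ z₀) = g z := by
        have := heq hφz₀; simpa [sub_eq_zero] using this
      exact hneval (e2.trans e1.symm)
    · have h2 : ∀ᶠ u in 𝓝 z, (u ≠ z → g u ≠ g z) ∧ u ∈ UHP := by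
        have h2a := eventually_nhdsWithin_iff.mp h1
        filter_upwards [h2a, isOpen_UHP.mem_nhds hz] with u hu huU
        refine ⟨fun hne => ?_, huU⟩
        have := hu (by simpa using hne)
        intro hval
        exact this (by rw [hval]; ring)
      obtain ⟨ε₀, hε₀, hball⟩ := Metric.eventually_nhds_iff_ball.mp h2
      refine ⟨ε₀/2, by positivity, ?_, ?_⟩
      · intro u hu
        exact (hball u (lt_of_le_of_lt (mem_closedBall.mp hu) (by linarith))).2
      · intro u hu hgu
        by_contra hne
        exact (hball u (lt_of_le_of_lt (mem_closedBall.mp hu) (by linarith))).1 hne hgu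
  -- equality of normalized iterates detects equality of orbits
  have hgn_inj : ∀ n : ℕ, ∀ u w : ℂ, gn n u = gn n w → φ^[n] u = φ^[n] w := by
    intro n u w h
    have h1 := congrArg (fun t => ((φ^[n] z₀).re : ℂ) + t * ((φ^[n] z₀).im : ℂ)) h
    simpa only [hgn_eq] using h1
  -- KEY intermediate result
  have key1 : ∀ z ∈ UHP, ∀ w ∈ UHP, g z = g w → ∃ n : ℕ, φ^[n] z = φ^[n] w := by
    intro z hz w hw hgzw
    obtain ⟨ε, hε, hball, huniq⟩ := hiso z hz
    obtain ⟨u₀, hu₀s, hminOn⟩ := (isCompact_sphere z ε).exists_isMinOn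
      (NormedSpace.sphere_nonempty.mpr hε.le)
      (((hgdiff.continuousOn.mono (sphere_subset_closedBall.trans hball)).sub
        continuousOn_const).norm)
    set δ : ℝ := ‖g u₀ - g z‖ with hδdef
    have hδ : 0 < δ := by
      rw [hδdef, norm_pos_iff, sub_ne_zero]
      intro h
      have := huniq u₀ (sphere_subset_closedBall hu₀s) h
      rw [this] at hu₀s
      simp only [mem_sphere, dist_self] at hu₀s
      exact hε.ne hu₀s
    have hmin : ∀ u ∈ sphere z ε, δ ≤ ‖g u - g z‖ := fun u hu => hminOn hu
    -- choose n
    have hev1 := (tendstoUniformlyOn_iff.mp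
      (hunif (closedBall z ε) hball (isCompact_closedBall z ε))) (δ/6) (by positivity)
    have hev2 : ∀ᶠ n in atTop, dist (g w) (gn n w) < δ/6 := by
      have h0 := Metric.tendsto_nhds.mp (hpt w hw) (δ/6) (by positivity)
      filter_upwards [h0] with n hn
      rwa [dist_comm] at hn
    obtain ⟨n, hn1, hn2⟩ := (hev1.and hev2).exists
    -- apply the Hurwitz lemma
    have hzero : ∃ u ∈ closedBall z ε, (fun u => gn n u - gn n w) u = 0 := by
      apply exists_zero_of_close hε (by positivity : (0:ℝ) < δ/2)
      · intro u hu
        exact (((hgn_diff n).differentiableAt (isOpen_UHP.mem_nhds (hball hu))).sub_const _)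
      · intro u hu
        have hguz : δ ≤ ‖g u - g z‖ := hmin u hu
        have h1 : ‖g u - gn n u‖ < δ/6 := by
          have := hn1 u (sphere_subset_closedBall hu)
          rwa [dist_eq_norm] at this
        have h2 : ‖g w - gn n w‖ < δ/6 := by rwa [dist_eq_norm] at hn2
        have heq2 : gn n u - gn n w = (g u - g z) - (g u - gn n u) + (g w - gn n w) := by
          rw [hgzw]; ring
        rw [heq2]
        calc δ/2 ≤ δ - δ/6 - δ/6 := by linarith
          _ ≤ ‖g u - g z‖ - ‖g u - gn n u‖ - ‖g w - gn n w‖ := by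
              have := norm_nonneg (g w - gn n w); linarith [hguz, h1.le, h2.le]
          _ ≤ ‖(g u - g z) - (g u - gn n u)‖ - ‖g w - gn n w‖ := by
              have := norm_sub_norm_le (g u - g z) (g u - gn n u); linarith
          _ ≤ ‖(g u - g z) - (g u - gn n u) + (g w - gn n w)‖ := by
              have h3 := norm_sub_norm_le ((g u - g z) - (g u - gn n u))
                (-(g w - gn n w))
              rw [norm_neg, sub_neg_eq_add] at h3
              linarith
      · -- center bound
        have h1 : gn n z - gn n w = (gn n z - g z) + (g w - gn n w) := by
          rw [hgzw]; ring
        have h2 : ‖g z - gn n z‖ < δ/6 := by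
          have := hn1 z (mem_closedBall_self hε.le)
          rwa [dist_eq_norm] at this
        have h3 : ‖g w - gn n w‖ < δ/6 := by rwa [dist_eq_norm] at hn2
        calc ‖gn n z - gn n w‖ = ‖(gn n z - g z) + (g w - gn n w)‖ := by rw [h1]
          _ ≤ ‖gn n z - g z‖ + ‖g w - gn n w‖ := norm_add_le _ _
          _ = ‖g z - gn n z‖ + ‖g w - gn n w‖ := by rw [norm_sub_rev]
          _ < δ/2 := by linarith
    obtain ⟨u, huB, hu0⟩ := hzero
    have hgnuw : gn n u = gn n w := by
      have := sub_eq_zero.mp hu0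
      exact this
    have horb : φ^[n] u = φ^[n] w := hgn_inj n u w hgnuw
    -- propagate to the limit: g u = g w
    have horb' : ∀ j : ℕ, φ^[j + n] u = φ^[j + n] w := by
      intro j
      rw [Function.iterate_add_apply, Function.iterate_add_apply, horb]
    have hglimu : Tendsto (fun j => gn (j + n) u - gn (j + n) w) atTop
        (𝓝 (g u - g w)) := by
      have h1 := (hpt u (hball huB)).sub (hpt w hw)
      exact h1.comp (tendsto_add_atTop_nat n)
    have hzero2 : (fun j => gn (j + n) u - gn (j + n) w) = fun _ => 0 := by
      funext j
      rw [hgn]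
      simp only []
      rw [horb' j]
      ring
    rw [hzero2] at hglimu
    have hguw : g u - g w = 0 := (tendsto_nhds_unique tendsto_const_nhds hglimu).symm
    have hgu : g u = g z := by
      rw [sub_eq_zero.mp hguw, hgzw]
    have huz : u = z := huniq u huB hgu
    rw [huz] at horb
    exact ⟨n, horb⟩
  -- Part 1
  have part1 : ∀ z ∈ UHP, ∀ w ∈ UHP,
      ((∃ n k : ℕ, φ^[n] z = φ^[k] w) ↔ (∃ m : ℤ, g z = (E ^ m) (g w))) := by
    intro z hz w hw
    constructor
    · rintro ⟨n, k, heq⟩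
      refine ⟨(k:ℤ) - (n:ℤ), ?_⟩
      have h1 : (E ^ n) (g z) = (E ^ k) (g w) := by
        rw [← hconj n z hz, ← hconj k w hw, heq]
      have h2 : (E ^ ((k:ℤ) - (n:ℤ))) = (E ^ ((n:ℤ)))⁻¹ * E ^ ((k:ℤ)) := by
        rw [← zpow_neg, ← zpow_add]
        congr 1
        ring
      rw [h2, Equiv.Perm.mul_apply, zpow_natCast, zpow_natCast, ← h1, ← zpow_natCast,
        ← Equiv.Perm.mul_apply, ← zpow_neg_one, ← zpow_mul, ← zpow_add]
      norm_num
    · rintro ⟨m, hm⟩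
      match m with
      | Int.ofNat k =>
        have hm' : g z = (E ^ k) (g w) := by
          rw [hm]
          norm_num [Int.ofNat_eq_natCast, zpow_natCast]
        rw [← hconj k w hw] at hm'
        obtain ⟨n, hn⟩ := key1 z hz (φ^[k] w) (hiter k w hw) hm'
        refine ⟨n, n + k, ?_⟩
        rw [hn, ← Function.iterate_add_apply]
      | Int.negSucc k =>
        have hm' : (E ^ (k+1)) (g z) = g w := by
          rw [hm, zpow_negSucc]
          exact Equiv.apply_symm_apply _ _
        rw [← hconj (k+1) z hz] at hm'
        obtain ⟨n, hn⟩ := key1 (φ^[k+1] z) (hiter (k+1) z hz) w hw hm'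
        refine ⟨n + (k+1), n, ?_⟩
        rw [← hn, ← Function.iterate_add_apply]
  -- ================= Part 2 =================
  -- the inverse iterates of E are affine with positive real slope
  have haff : ∀ N : ℕ, ∃ a c : ℝ, 0 < a ∧ ∀ u : ℂ, ((E ^ N).symm) u = (a:ℂ) * u + (c:ℂ) := by
    intro N
    induction N with
    | zero => exact ⟨1, 0, one_pos, fun u => by simp; rfl⟩
    | succ N ih =>
      obtain ⟨a, c, ha, hform⟩ := ih
      refine ⟨a / A, c - a * b / A, by positivity, fun u => ?_⟩
      have hstep : (E ^ (N+1)).symm u = (E ^ N).symm (E.symm u) := by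
        rw [pow_succ']
        rfl
      rw [hstep, hEsymmapp, hform]
      have hAne : (A:ℂ) ≠ 0 := Complex.ofReal_ne_zero.mpr hA0.ne'
      push_cast
      field_simp
      ring
  -- the regularized inverse maps G_N
  set Gn : ℕ → ℂ → ℂ := fun N w =>
    (E ^ N).symm (g (((φ^[N] z₀).re : ℂ) + w * ((φ^[N] z₀).im : ℂ))) with hGn
  have hinner : ∀ N : ℕ, ∀ w ∈ UHP, ((φ^[N] z₀).re : ℂ) + w * ((φ^[N] z₀).im : ℂ) ∈ UHP := by
    intro N w hw
    show 0 < (((φ^[N] z₀).re : ℂ) + w * ((φ^[N] z₀).im : ℂ)).im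
    rw [Complex.add_im, Complex.ofReal_im, Complex.mul_im, Complex.ofReal_im,
      Complex.ofReal_re]
    have hw' : 0 < w.im := hw
    have := hy N
    simp only [zero_add, mul_zero]
    nlinarith
  have hGmaps : ∀ N : ℕ, MapsTo (Gn N) UHP UHP := by
    intro N w hw
    obtain ⟨a, c, ha, hform⟩ := haff N
    rw [hGn]
    simp only []
    rw [hform]
    have hg' : g (((φ^[N] z₀).re : ℂ) + w * ((φ^[N] z₀).im : ℂ)) ∈ UHP :=
      hgmaps (hinner N w hw)
    show 0 < ((a:ℂ) * _ + (c:ℂ)).im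
    rw [Complex.add_im, Complex.ofReal_im, Complex.mul_im, Complex.ofReal_im,
      Complex.ofReal_re]
    have : 0 < (g (((φ^[N] z₀).re : ℂ) + w * ((φ^[N] z₀).im : ℂ))).im := hg'
    simp only [zero_mul, add_zero]
    nlinarith
  have hGdiff : ∀ N : ℕ, DifferentiableOn ℂ (Gn N) UHP := by
    intro N
    obtain ⟨a, c, ha, hform⟩ := haff N
    have heq : Gn N = fun w =>
        (a:ℂ) * g (((φ^[N] z₀).re : ℂ) + w * ((φ^[N] z₀).im : ℂ)) + (c:ℂ) := by
      funext w
      rw [hGn]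
      simp only []
      rw [hform]
    rw [heq]
    have hindiff : DifferentiableOn ℂ
        (fun w : ℂ => g (((φ^[N] z₀).re : ℂ) + w * ((φ^[N] z₀).im : ℂ))) UHP := by
      apply DifferentiableOn.comp hgdiff
      · exact ((differentiable_id.mul_const _).const_add _).differentiableOn
      · intro w hw
        exact hinner N w hw
    exact (hindiff.const_mul _).add_const _
  have hGfix : ∀ N : ℕ, Gn N Complex.I = Complex.I := by
    intro N
    rw [hGn]
    simp only []
    have h1 : ((φ^[N] z₀).re : ℂ) + Complex.I * ((φ^[N] z₀).im : ℂ) = φ^[N] z₀ := by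
      rw [mul_comm]
      exact Complex.re_add_im _
    rw [h1, hconj N z₀ hz₀, hgz₀, Equiv.symm_apply_apply]
  have hGgn : ∀ N : ℕ, ∀ u ∈ UHP, Gn N (gn N u) = g u := by
    intro N u hu
    rw [hGn]
    simp only []
    rw [hgn_eq N u, hconj N u hu, Equiv.symm_apply_apply]
  have hGcay : ∀ N : ℕ, ∀ w ∈ UHP, ‖cay (Gn N w)‖ ≤ ‖cay w‖ :=
    fun N w hw => selfmap_cay_bound (hGdiff N) (hGmaps N) (hGfix N) hw
  -- uniform bound for ‖Gn N - id‖ on closed balls in UHP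
  have hGbound : ∀ (c' : ℂ) (R : ℝ), 0 < R → closedBall c' R ⊆ UHP →
      ∃ M > 0, ∀ N : ℕ, ∀ u ∈ closedBall c' R, ‖Gn N u - u‖ ≤ M := by
    intro c' R hR hsub
    have hcont : ContinuousOn (fun u => ‖cay u‖) (closedBall c' R) := by
      apply continuous_norm.comp_continuousOn
      intro u hu
      exact (diffAt_cay (hsub hu)).continuousAt.continuousWithinAt
    obtain ⟨uκ, huκ, hmax⟩ := (isCompact_closedBall c' R).exists_isMaxOn
      ⟨c', mem_closedBall_self hR.le⟩ hcont
    set κ : ℝ := ‖cay uκ‖ with hκdef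
    have hκ0 : 0 ≤ κ := norm_nonneg _
    have hκ1 : κ < 1 := by
      have := cay_mem_ball (hsub huκ)
      rwa [mem_ball_zero_iff] at this
    have hM0 : (0:ℝ) < 2*κ/(1-κ) + (R + dist c' Complex.I) + 1 := by
      have hd1 : (0:ℝ) ≤ 2*κ/(1-κ) := div_nonneg (by linarith) (by linarith)
      have hd2 : (0:ℝ) ≤ dist c' Complex.I := dist_nonneg
      linarith
    refine ⟨2*κ/(1-κ) + (R + dist c' Complex.I) + 1, hM0, ?_⟩
    intro N u hu
    have huU : u ∈ UHP := hsub hu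
    have h1 : ‖cay (Gn N u)‖ ≤ κ := le_trans (hGcay N u huU) (hmax hu)
    have h2 : ‖Gn N u - Complex.I‖ ≤ 2*κ/(1-κ) :=
      bound_from_cay (hGmaps N huU) h1 hκ1
    have h3 : ‖u - Complex.I‖ ≤ R + dist c' Complex.I := by
      calc ‖u - Complex.I‖ = dist u Complex.I := (dist_eq_norm _ _).symm
        _ ≤ dist u c' + dist c' Complex.I := dist_triangle _ _ _
        _ ≤ R + dist c' Complex.I := by
            have := mem_closedBall.mp hu; linarith
    calc ‖Gn N u - u‖ = ‖(Gn N u - Complex.I) - (u - Complex.I)‖ := by ring_nf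
      _ ≤ ‖Gn N u - Complex.I‖ + ‖u - Complex.I‖ := norm_sub_le _ _
      _ ≤ 2*κ/(1-κ) + (R + dist c' Complex.I) := by
          have h2' : ‖Gn N u - Complex.I‖ ≤ 2*κ/(1-κ) := h2
          linarith
      _ ≤ 2*κ/(1-κ) + (R + dist c' Complex.I) + 1 := by linarith
  -- the set where Gn → id uniformly on a small closed ball
  set Sset : Set ℂ := {c : ℂ | ∃ r > 0, closedBall c r ⊆ UHP ∧
    ∀ ε > 0, ∀ᶠ N in atTop, ∀ v ∈ closedBall c r, ‖Gn N v - v‖ ≤ ε} with hSset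
  -- base point : I ∈ Sset
  have hbase : Complex.I ∈ Sset := by
    obtain ⟨ε₁, hε₁, hball₁, huniq₁⟩ := hiso z₀ hz₀
    obtain ⟨u₀, hu₀s, hminOn⟩ := (isCompact_sphere z₀ ε₁).exists_isMinOn
      (NormedSpace.sphere_nonempty.mpr hε₁.le)
      (((hgdiff.continuousOn.mono (sphere_subset_closedBall.trans hball₁)).sub
        continuousOn_const).norm)
    set δ₀ : ℝ := ‖g u₀ - Complex.I‖ with hδ₀def
    have hδ₀ : 0 < δ₀ := by
      rw [hδ₀def, norm_pos_iff, sub_ne_zero]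
      intro h
      have h' : g u₀ = g z₀ := by rw [h, hgz₀]
      have := huniq₁ u₀ (sphere_subset_closedBall hu₀s) h'
      rw [this] at hu₀s
      simp only [mem_sphere, dist_self] at hu₀s
      exact hε₁.ne hu₀s
    have hmin : ∀ u ∈ sphere z₀ ε₁, δ₀ ≤ ‖g u - Complex.I‖ := by
      intro u hu
      have := hminOn hu
      simpa [hδ₀def, hgz₀] using this
    set r : ℝ := min (δ₀/3) (1/2) with hrdef
    have hr0 : 0 < r := lt_min (by positivity) (by norm_num)
    have hrle : r ≤ δ₀/3 := min_le_left _ _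
    have hrle2 : r ≤ 1/2 := min_le_right _ _
    have hrsub : closedBall Complex.I r ⊆ UHP := by
      intro v hv
      have h1 : ‖v - Complex.I‖ ≤ 1/2 := by
        rw [← dist_eq_norm]
        exact le_trans (mem_closedBall.mp hv) hrle2
      have h2 : |(v - Complex.I).im| ≤ ‖v - Complex.I‖ := Complex.abs_im_le_norm _
      have h3 : (v - Complex.I).im = v.im - 1 := by simp
      rw [h3] at h2
      have h4 : |v.im - 1| ≤ 1/2 := le_trans h2 h1
      have h5 := abs_le.mp h4
      show 0 < v.im
      linarith [h5.1]
    refine ⟨r, hr0, hrsub, ?_⟩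
    intro ε hε
    have hev := (tendstoUniformlyOn_iff.mp
      (hunif (closedBall z₀ ε₁) hball₁ (isCompact_closedBall _ _)))
      (min (δ₀/6) ε) (lt_min (by positivity) hε)
    filter_upwards [hev] with N hN
    intro v hv
    have hvI : ‖v - Complex.I‖ ≤ r := by
      rw [← dist_eq_norm]; exact mem_closedBall.mp hv
    have hzero : ∃ u ∈ closedBall z₀ ε₁, (fun u => gn N u - v) u = 0 := by
      apply exists_zero_of_close hε₁ (by positivity : (0:ℝ) < δ₀/2)
      · intro u hu
        exact ((hgn_diff N).differentiableAt (isOpen_UHP.mem_nhds (hball₁ hu))).sub_const _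
      · intro u hu
        have hgu : δ₀ ≤ ‖g u - Complex.I‖ := hmin u hu
        have h1 : ‖g u - gn N u‖ < δ₀/6 := by
          have := hN u (sphere_subset_closedBall hu)
          rw [dist_eq_norm] at this
          exact lt_of_lt_of_le this (min_le_left _ _)
        have heq2 : gn N u - v = (g u - Complex.I) - (g u - gn N u) - (v - Complex.I) := by
          ring
        rw [heq2]
        have hA1 := norm_sub_norm_le ((g u - Complex.I) - (g u - gn N u)) (v - Complex.I)
        have hA2 := norm_sub_norm_le (g u - Complex.I) (g u - gn N u)
        calc δ₀/2 ≤ (δ₀ - δ₀/6) - δ₀/3 := by linarith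
          _ ≤ (‖g u - Complex.I‖ - ‖g u - gn N u‖) - ‖v - Complex.I‖ := by linarith
          _ ≤ ‖(g u - Complex.I) - (g u - gn N u)‖ - ‖v - Complex.I‖ := by linarith
          _ ≤ ‖(g u - Complex.I) - (g u - gn N u) - (v - Complex.I)‖ := hA1
      · show ‖gn N z₀ - v‖ < δ₀/2
        rw [hgnz₀ N]
        calc ‖Complex.I - v‖ = ‖v - Complex.I‖ := by rw [norm_sub_rev]
          _ ≤ r := hvI
          _ < δ₀/2 := by linarith
    obtain ⟨u, huB, hu0⟩ := hzero
    have hgnv : gn N u = v := sub_eq_zero.mp hu0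
    have hGv : Gn N v = g u := by rw [← hgnv]; exact hGgn N u (hball₁ huB)
    have heq3 : ‖Gn N v - v‖ = ‖g u - gn N u‖ := by rw [hGv, hgnv]
    rw [heq3]
    have h4 := hN u huB
    rw [dist_eq_norm] at h4
    exact (lt_of_lt_of_le h4 (min_le_right _ _)).le
  -- Sset is open
  have hSopen : IsOpen Sset := by
    rw [Metric.isOpen_iff]
    rintro c ⟨r, hr, hsub, hconv⟩
    refine ⟨r/2, by positivity, ?_⟩
    intro c'' hc''
    have hd : dist c'' c < r/2 := mem_ball.mp hc''
    refine ⟨r/2, by positivity, ?_, ?_⟩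
    · intro v hv
      apply hsub
      have := mem_closedBall.mp hv
      have h2 : dist v c ≤ dist v c'' + dist c'' c := dist_triangle _ _ _
      exact mem_closedBall.mpr (by linarith)
    · intro ε hε
      filter_upwards [hconv ε hε] with N hN
      intro v hv
      apply hN
      have := mem_closedBall.mp hv
      have h2 : dist v c ≤ dist v c'' + dist c'' c := dist_triangle _ _ _
      exact mem_closedBall.mpr (by linarith)
  -- Sset is relatively closed in UHP (by propagation of smallness)
  have hSclosed : closure Sset ∩ UHP ⊆ Sset := by
    rintro c ⟨hccl, hcU⟩
    have hcim : 0 < c.im := hcU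
    obtain ⟨c', hc'S, hc'd⟩ := Metric.mem_closure_iff.mp hccl (c.im/100) (by positivity)
    obtain ⟨r', hr', hsubr', hconv'⟩ := hc'S
    have hc'im : c.im - c.im/100 ≤ c'.im := by
      have h2 : |(c - c').im| ≤ ‖c - c'‖ := Complex.abs_im_le_norm _
      have h3 : (c - c').im = c.im - c'.im := by simp
      have h4 : ‖c - c'‖ = dist c c' := by rw [dist_eq_norm]
      rw [h3, h4] at h2
      have h5 := abs_le.mp (le_trans h2 hc'd.le)
      linarith [h5.2]
    set R : ℝ := c.im/4 with hRdef
    have hR0 : 0 < R := by rw [hRdef]; positivity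
    have hsubR : closedBall c' R ⊆ UHP := by
      intro u hu
      have h2 : |(u - c').im| ≤ ‖u - c'‖ := Complex.abs_im_le_norm _
      have h3 : (u - c').im = u.im - c'.im := by simp
      have h4 : ‖u - c'‖ = dist u c' := by rw [dist_eq_norm]
      rw [h3, h4] at h2
      have h5 := abs_le.mp (le_trans h2 (mem_closedBall.mp hu))
      show 0 < u.im
      rw [hRdef] at h5
      linarith [h5.1]
    obtain ⟨M, hM0, hMb⟩ := hGbound c' R hR0 hsubR
    set r'' : ℝ := min r' (R/4) with hr''def
    have hr''0 : 0 < r'' := lt_min hr' (by positivity)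
    refine ⟨R/8, by positivity, ?_, ?_⟩
    · intro u hu
      apply hsubR
      have h1 := mem_closedBall.mp hu
      have h2 : dist u c' ≤ dist u c + dist c c' := dist_triangle _ _ _
      apply mem_closedBall.mpr
      rw [hRdef] at h1 ⊢
      linarith [hc'd.le]
    · intro ε hε
      obtain ⟨η, hη0, hprop⟩ := prop_small (c := c') (R := R) (r := r'')
        hr''0 (min_le_right _ _) hM0 hε
      filter_upwards [hconv' η hη0] with N hN
      intro v hv
      have hvmem : v ∈ closedBall c' (R/2) := by
        have h1 := mem_closedBall.mp hv
        have h2 : dist v c' ≤ dist v c + dist c c' := dist_triangle _ _ _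
        apply mem_closedBall.mpr
        rw [hRdef] at h1 ⊢
        linarith [hc'd.le]
      refine hprop (fun u => Gn N u - u) ?_ ?_ ?_ v hvmem
      · exact ((hGdiff N).mono hsubR).sub differentiableOn_id
      · exact hMb N
      · intro u hu
        exact hN u (closedBall_subset_closedBall (min_le_left _ _) hu)
  have hSU : UHP ⊆ Sset :=
    preconnected_UHP.subset_of_closure_inter_subset hSopen
      ⟨Complex.I, I_mem_UHP, hbase⟩ hSclosed
  -- assemble the two parts
  refine ⟨part1, ?_⟩
  intro ζ hζ
  obtain ⟨r, hr0, hsub, hconv⟩ := hSU hζ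
  obtain ⟨N, hN⟩ := (hconv (r/4) (by positivity)).exists
  have hzero : ∃ w ∈ closedBall ζ r, (fun u => Gn N u - ζ) w = 0 := by
    apply exists_zero_of_close hr0 (by positivity : (0:ℝ) < r/2)
    · intro u hu
      exact ((hGdiff N).differentiableAt (isOpen_UHP.mem_nhds (hsub hu))).sub_const _
    · intro u hu
      show r/2 ≤ ‖Gn N u - ζ‖
      have h1 : ‖u - ζ‖ = r := by
        rw [← dist_eq_norm]; exact mem_sphere.mp hu
      have h2 : ‖Gn N u - u‖ ≤ r/4 := hN u (sphere_subset_closedBall hu)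
      have heq2 : Gn N u - ζ = (u - ζ) - (-(Gn N u - u)) := by ring
      rw [heq2]
      have hA1 := norm_sub_norm_le (u - ζ) (-(Gn N u - u))
      rw [norm_neg] at hA1
      calc r/2 ≤ r - r/4 := by linarith
        _ ≤ ‖u - ζ‖ - ‖Gn N u - u‖ := by linarith [h1.ge]
        _ ≤ ‖(u - ζ) - (-(Gn N u - u))‖ := hA1
    · show ‖Gn N ζ - ζ‖ < r/2
      have := hN ζ (mem_closedBall_self hr0.le)
      linarith
  obtain ⟨w, hwB, hw0⟩ := hzero
  have hGw : Gn N w = ζ := sub_eq_zero.mp hw0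
  have hwU : w ∈ UHP := hsub hwB
  refine ⟨((φ^[N] z₀).re : ℂ) + w * ((φ^[N] z₀).im : ℂ), hinner N w hwU, (N:ℤ), ?_⟩
  rw [zpow_natCast]
  have hsy : (E ^ N).symm (g (((φ^[N] z₀).re : ℂ) + w * ((φ^[N] z₀).im : ℂ))) = ζ := hGw
  have := (Equiv.symm_apply_eq (E ^ N)).mp hsy
  exact this.symm
end
end

section
/- Let φ be of hyperbolic type (A > 1) as in the context, and let (g, α(z) = Az + b) and (g̃, α̃(z) = Az + b̃) be the classical semiconjugations obtained by renormalizing the iterates φ_n along the orbits of z₀ and z̃₀ respectively. Then for all z ∈ ℍ: (g̃(z) + b̃/(A−1)) / (i + b̃/(A−1)) = (g(z) + b/(A−1)) / (g(z̃₀) + b/(A−1)). -/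
open Complex Filter Set Topology

noncomputable section

/-- Uniqueness for hyperbolic self-maps: the classical semiconjugations obtained from two
different base points agree up to an explicit affine change of variables. -/
theorem hyperbolic_semiconjugation_uniqueness
    (φ p g gt : ℂ → ℂ) (A b bt : ℝ) (z₀ zt₀ : ℂ)
    (hz₀ : z₀ ∈ UHP)
    (hzt₀ : zt₀ ∈ UHP)
    (hφmaps : Set.MapsTo φ UHP UHP)
    (hφdiff : DifferentiableOn ℂ φ UHP)
    (hφnotaut : ¬ IsAutH φ)
    (hA : 1 < A)
    (hφeq : ∀ z ∈ UHP, φ z = (A : ℂ) * z + p z)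
    (hpim : ∀ z ∈ UHP, 0 < (p z).im)
    (hpnt : NTLimZeroAtInf (fun z => p z / z))
    (hgmaps : Set.MapsTo g UHP UHP)
    (hgdiff : DifferentiableOn ℂ g UHP)
    (hgz₀ : g z₀ = Complex.I)
    (hglim : TendstoLocallyUniformlyOn
      (fun (n : ℕ) (z : ℂ) => (φ^[n] z - ((φ^[n] z₀).re : ℂ)) / ((φ^[n] z₀).im : ℂ))
      g Filter.atTop UHP)
    (hgconj : ∀ z ∈ UHP, g (φ z) = (A : ℂ) * g z + (b : ℂ))
    (hgtmaps : Set.MapsTo gt UHP UHP)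
    (hgtdiff : DifferentiableOn ℂ gt UHP)
    (hgtz₀ : gt zt₀ = Complex.I)
    (hgtlim : TendstoLocallyUniformlyOn
      (fun (n : ℕ) (z : ℂ) => (φ^[n] z - ((φ^[n] zt₀).re : ℂ)) / ((φ^[n] zt₀).im : ℂ))
      gt Filter.atTop UHP)
    (hgtconj : ∀ z ∈ UHP, gt (φ z) = (A : ℂ) * gt z + (bt : ℂ)) :
    ∀ z ∈ UHP,
      (gt z + ((bt / (A - 1) : ℝ) : ℂ)) / (Complex.I + ((bt / (A - 1) : ℝ) : ℂ)) =
      (g z + ((b / (A - 1) : ℝ) : ℂ)) / (g zt₀ + ((b / (A - 1) : ℝ) : ℂ)) := by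
  intro z hz
  have horb : ∀ w ∈ UHP, ∀ n : ℕ, φ^[n] w ∈ UHP := fun w hw n => hφmaps.iterate n hw
  -- self-renormalization is I
  have hself : ∀ w : ℂ, 0 < w.im → (w - (w.re : ℂ)) / ((w.im : ℂ)) = Complex.I := by
    intro w hw
    rw [div_eq_iff (by exact_mod_cast hw.ne')]
    linear_combination -(Complex.re_add_im w)
  set c : ℝ := (gt z₀).im with hc_def
  set d : ℝ := (gt z₀).re with hd_def
  have hc0 : 0 < c := hgtmaps hz₀
  -- the sequences cₙ, dₙ
  set vn : ℕ → ℝ := fun n => (φ^[n] z₀).im with hvn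
  set un : ℕ → ℝ := fun n => (φ^[n] z₀).re with hun
  set vtn : ℕ → ℝ := fun n => (φ^[n] zt₀).im with hvtn
  set utn : ℕ → ℝ := fun n => (φ^[n] zt₀).re with hutn
  have hvn0 : ∀ n, 0 < vn n := fun n => horb z₀ hz₀ n
  have hvtn0 : ∀ n, 0 < vtn n := fun n => horb zt₀ hzt₀ n
  -- F_n z₀ → gt z₀
  have hFz₀ : Tendsto (fun n => (φ^[n] z₀ - ((utn n : ℝ) : ℂ)) / ((vtn n : ℝ) : ℂ))
      atTop (nhds (gt z₀)) := hgtlim.tendsto_at hz₀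
  have hcn : Tendsto (fun n => vn n / vtn n) atTop (nhds c) := by
    have := (Complex.continuous_im.tendsto _).comp hFz₀
    refine this.congr (fun n => ?_)
    simp [Complex.div_ofReal_im]
    rfl
  have hdn : Tendsto (fun n => (un n - utn n) / vtn n) atTop (nhds d) := by
    have := (Complex.continuous_re.tendsto _).comp hFz₀
    refine this.congr (fun n => ?_)
    simp [Complex.div_ofReal_re]
    rfl
  have hcnC : Tendsto (fun n => ((vn n / vtn n : ℝ) : ℂ)) atTop (nhds (c : ℂ)) :=
    (Complex.continuous_ofReal.tendsto _).comp hcn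
  have hdnC : Tendsto (fun n => (((un n - utn n) / vtn n : ℝ) : ℂ)) atTop (nhds (d : ℂ)) :=
    (Complex.continuous_ofReal.tendsto _).comp hdn
  -- key affine relation
  have key : ∀ y ∈ UHP, gt y = (c : ℂ) * g y + (d : ℂ) := by
    intro y hy
    have hGy : Tendsto (fun n => (φ^[n] y - ((un n : ℝ) : ℂ)) / ((vn n : ℝ) : ℂ))
        atTop (nhds (g y)) := hglim.tendsto_at hy
    have hFy : Tendsto (fun n => (φ^[n] y - ((utn n : ℝ) : ℂ)) / ((vtn n : ℝ) : ℂ))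
        atTop (nhds (gt y)) := hgtlim.tendsto_at hy
    have hcomb : Tendsto (fun n => ((vn n / vtn n : ℝ) : ℂ) *
          ((φ^[n] y - ((un n : ℝ) : ℂ)) / ((vn n : ℝ) : ℂ)) +
          (((un n - utn n) / vtn n : ℝ) : ℂ))
        atTop (nhds ((c : ℂ) * g y + (d : ℂ))) := (hcnC.mul hGy).add hdnC
    refine tendsto_nhds_unique hFy (hcomb.congr fun n => ?_)
    have h1 : ((vn n : ℝ) : ℂ) ≠ 0 := Complex.ofReal_ne_zero.mpr (hvn0 n).ne'
    have h2 : ((vtn n : ℝ) : ℂ) ≠ 0 := Complex.ofReal_ne_zero.mpr (hvtn0 n).ne'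
    push_cast
    field_simp
    ring
  -- functional-equation relation between b, bt, c, d
  have E : (A : ℂ) * ((c : ℂ) * g z₀ + (d : ℂ)) + (bt : ℂ)
      = (c : ℂ) * ((A : ℂ) * g z₀ + (b : ℂ)) + (d : ℂ) := by
    calc (A : ℂ) * ((c : ℂ) * g z₀ + (d : ℂ)) + (bt : ℂ)
        = (A : ℂ) * gt z₀ + (bt : ℂ) := by rw [← key z₀ hz₀]
      _ = gt (φ z₀) := (hgtconj z₀ hz₀).symm
      _ = (c : ℂ) * g (φ z₀) + (d : ℂ) := key (φ z₀) (hφmaps hz₀)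
      _ = (c : ℂ) * ((A : ℂ) * g z₀ + (b : ℂ)) + (d : ℂ) := by rw [hgconj z₀ hz₀]
  have hA1 : ((A : ℂ) - 1) ≠ 0 := sub_ne_zero.mpr (by exact_mod_cast hA.ne')
  have h1 : gt z + ((bt / (A - 1) : ℝ) : ℂ) = (c : ℂ) * (g z + ((b / (A - 1) : ℝ) : ℂ)) := by
    rw [key z hz]
    push_cast
    field_simp
    linear_combination E
  have h2 : Complex.I + ((bt / (A - 1) : ℝ) : ℂ)
      = (c : ℂ) * (g zt₀ + ((b / (A - 1) : ℝ) : ℂ)) := by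
    rw [← hgtz₀, key zt₀ hzt₀]
    push_cast
    field_simp
    linear_combination E
  rw [h1, h2, mul_div_mul_left _ _ (Complex.ofReal_ne_zero.mpr hc0.ne')]
end
end

section
/- Let φ be of parabolic non-zero-step type (A = 1) as in the context, and let (g, α(z) = z + b) and (g̃, α̃(z) = z + b̃) be the classical semiconjugations obtained by renormalizing the iterates φ_n along the orbits of z₀ and z̃₀ respectively (so b, b̃ ∈ ℝ \ {0}). Then for all z ∈ ℍ: (g̃(z) − i)/|b̃| = (g(z) − g(z̃₀))/|b|. -/
open Complex Filter Set Topology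

noncomputable section

/-- Uniqueness for parabolic non-zero-step self-maps: the classical semiconjugations
obtained from two different base points agree up to an explicit affine change of variables. -/
theorem parabolic_nonzero_step_semiconjugation_uniqueness
    (φ p g gt : ℂ → ℂ) (b bt : ℝ) (z₀ zt₀ : ℂ)
    (hz₀ : z₀ ∈ UHP)
    (hzt₀ : zt₀ ∈ UHP)
    (hφmaps : Set.MapsTo φ UHP UHP)
    (hφdiff : DifferentiableOn ℂ φ UHP)
    (hφnotaut : ¬ IsAutH φ)
    (hφeq : ∀ z ∈ UHP, φ z = z + p z)
    (hpim : ∀ z ∈ UHP, 0 < (p z).im)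
    (hpnt : NTLimZeroAtInf (fun z => p z / z))
    (hnzs : ∃ s : ℝ, 0 < s ∧
      Filter.Tendsto (fun n : ℕ => rho (φ^[n] z₀) (φ^[n + 1] z₀)) Filter.atTop (nhds s))
    (hb : b ≠ 0)
    (hbt : bt ≠ 0)
    (hgmaps : Set.MapsTo g UHP UHP)
    (hgdiff : DifferentiableOn ℂ g UHP)
    (hgz₀ : g z₀ = Complex.I)
    (hglim : TendstoLocallyUniformlyOn
      (fun (n : ℕ) (z : ℂ) => (φ^[n] z - ((φ^[n] z₀).re : ℂ)) / ((φ^[n] z₀).im : ℂ))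
      g Filter.atTop UHP)
    (hgconj : ∀ z ∈ UHP, g (φ z) = g z + (b : ℂ))
    (hgtmaps : Set.MapsTo gt UHP UHP)
    (hgtdiff : DifferentiableOn ℂ gt UHP)
    (hgtz₀ : gt zt₀ = Complex.I)
    (hgtlim : TendstoLocallyUniformlyOn
      (fun (n : ℕ) (z : ℂ) => (φ^[n] z - ((φ^[n] zt₀).re : ℂ)) / ((φ^[n] zt₀).im : ℂ))
      gt Filter.atTop UHP)
    (hgtconj : ∀ z ∈ UHP, gt (φ z) = gt z + (bt : ℂ)) :
    ∀ z ∈ UHP,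
      (gt z - Complex.I) / ((|bt| : ℝ) : ℂ) = (g z - g zt₀) / ((|b| : ℝ) : ℂ) := by
  have horb : ∀ w ∈ UHP, ∀ n : ℕ, φ^[n] w ∈ UHP := by
    intro w hw n
    induction n with
    | zero => simpa using hw
    | succ n ih => rw [Function.iterate_succ_apply']; exact hφmaps ih
  set a : ℕ → ℝ := fun n => (φ^[n] z₀).im / (φ^[n] zt₀).im with ha
  set c : ℕ → ℝ := fun n => ((φ^[n] z₀).re - (φ^[n] zt₀).re) / (φ^[n] zt₀).im with hc
  have hv : ∀ n, (φ^[n] z₀).im ≠ 0 := fun n => ne_of_gt (horb z₀ hz₀ n)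
  have hvt : ∀ n, (φ^[n] zt₀).im ≠ 0 := fun n => ne_of_gt (horb zt₀ hzt₀ n)
  have hkey : ∀ (n : ℕ) (ζ : ℂ),
      (ζ - ((φ^[n] zt₀).re : ℂ)) / ((φ^[n] zt₀).im : ℂ)
        = (a n : ℂ) * ((ζ - ((φ^[n] z₀).re : ℂ)) / ((φ^[n] z₀).im : ℂ)) + (c n : ℂ) := by
    intro n ζ
    have h1 : ((φ^[n] z₀).im : ℂ) ≠ 0 := by exact_mod_cast hv n
    have h2 : ((φ^[n] zt₀).im : ℂ) ≠ 0 := by exact_mod_cast hvt n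
    simp only [ha, hc]
    push_cast
    field_simp
    ring
  have hgt_at_z0 : Tendsto (fun n : ℕ =>
      (φ^[n] z₀ - ((φ^[n] zt₀).re : ℂ)) / ((φ^[n] zt₀).im : ℂ)) atTop (𝓝 (gt z₀)) :=
    hgtlim.tendsto_at hz₀
  have hIz0 : ∀ n : ℕ,
      (φ^[n] z₀ - ((φ^[n] z₀).re : ℂ)) / ((φ^[n] z₀).im : ℂ) = Complex.I := by
    intro n
    have h1 : ((φ^[n] z₀).im : ℂ) ≠ 0 := by exact_mod_cast hv n
    rw [div_eq_iff h1]
    simp [Complex.ext_iff]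
  have hseq : ∀ n : ℕ,
      (φ^[n] z₀ - ((φ^[n] zt₀).re : ℂ)) / ((φ^[n] zt₀).im : ℂ)
        = (a n : ℂ) * Complex.I + (c n : ℂ) := by
    intro n; rw [hkey n, hIz0 n]
  set A : ℝ := (gt z₀).im with hAdef
  set C : ℝ := (gt z₀).re with hCdef
  have hA : Tendsto a atTop (𝓝 A) := by
    have h := (Complex.continuous_im.tendsto (gt z₀)).comp hgt_at_z0
    refine h.congr ?_
    intro n
    simp only [Function.comp_apply]
    rw [hseq n]; simp
  have hC : Tendsto c atTop (𝓝 C) := by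
    have h := (Complex.continuous_re.tendsto (gt z₀)).comp hgt_at_z0
    refine h.congr ?_
    intro n
    simp only [Function.comp_apply]
    rw [hseq n]; simp
  have hAc : Tendsto (fun n => ((a n : ℂ))) atTop (𝓝 (A : ℂ)) :=
    (Complex.continuous_ofReal.tendsto A).comp hA
  have hCc : Tendsto (fun n => ((c n : ℂ))) atTop (𝓝 (C : ℂ)) :=
    (Complex.continuous_ofReal.tendsto C).comp hC
  have hform : ∀ w ∈ UHP, gt w = (A : ℂ) * g w + (C : ℂ) := by
    intro w hw
    have h1 := hgtlim.tendsto_at hw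
    have h2 := hglim.tendsto_at hw
    have h3 : Tendsto (fun n : ℕ =>
        (a n : ℂ) * ((φ^[n] w - ((φ^[n] z₀).re : ℂ)) / ((φ^[n] z₀).im : ℂ)) + (c n : ℂ))
        atTop (𝓝 ((A : ℂ) * g w + (C : ℂ))) := (hAc.mul h2).add hCc
    have h4 : Tendsto (fun n : ℕ =>
        (φ^[n] w - ((φ^[n] zt₀).re : ℂ)) / ((φ^[n] zt₀).im : ℂ))
        atTop (𝓝 ((A : ℂ) * g w + (C : ℂ))) := h3.congr (fun n => (hkey n _).symm)
    exact tendsto_nhds_unique h1 h4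
  have hApos : 0 < A := hgtmaps hz₀
  have hrel : Complex.I = (A : ℂ) * g zt₀ + (C : ℂ) := by
    rw [← hgtz₀]; exact hform zt₀ hzt₀
  have hbtb : bt = A * b := by
    have h1 := hgtconj z₀ hz₀
    rw [hform (φ z₀) (hφmaps hz₀), hform z₀ hz₀, hgconj z₀ hz₀] at h1
    have h2 : ((A * b : ℝ) : ℂ) = (bt : ℂ) := by push_cast; linear_combination h1
    exact_mod_cast h2.symm
  have habs : |bt| = A * |b| := by
    rw [hbtb, abs_mul, abs_of_pos hApos]
  intro z hz
  rw [hform z hz, habs]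
  have hAne : (A : ℂ) ≠ 0 := by exact_mod_cast ne_of_gt hApos
  have hbne : ((|b| : ℝ) : ℂ) ≠ 0 := by exact_mod_cast abs_ne_zero.mpr hb
  push_cast
  rw [hrel]
  field_simp
  ring
end
end

section
/- Let T > 1. There is no analytic map σ : ℍ → ℍ satisfying σ(z + 1) = T·σ(z) for all z ∈ ℍ. -/
open Complex Filter Set Topology

noncomputable section

/-- If `u, v` are in the upper half-plane, `u` is strictly closer to `v` than to `conj v`. -/
lemma abs_sub_lt_abs_sub_conj {u v : ℂ} (hu : 0 < u.im) (hv : 0 < v.im) :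
    ‖u - v‖ < ‖u - (starRingEnd ℂ) v‖ := by
  rw [Complex.norm_def, Complex.norm_def]
  apply Real.sqrt_lt_sqrt (Complex.normSq_nonneg _)
  simp only [Complex.normSq_apply, Complex.sub_re, Complex.sub_im, Complex.conj_re,
    Complex.conj_im]
  nlinarith

/-- For `T > 1`, there is no analytic self-map `σ` of the upper half-plane with
`σ(z + 1) = T · σ(z)`. -/
theorem no_selfmap_conjugating_translation_to_dilation (T : ℝ) (hT : 1 < T) :
    ¬ ∃ σ : ℂ → ℂ, Set.MapsTo σ UHP UHP ∧ DifferentiableOn ℂ σ UHP ∧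
      ∀ z ∈ UHP, σ (z + 1) = (T : ℂ) * σ z := by
  rintro ⟨σ, hmaps, hdiff, hfe⟩
  have hT1 : 0 < T - 1 := by linarith
  set y : ℝ := (T + 1) / (T - 1) + 1 with hy
  have hq : 0 < (T + 1) / (T - 1) := div_pos (by linarith) hT1
  have hy1 : 1 < y := by simp only [hy]; linarith
  set z : ℂ := Complex.I * (y : ℂ) with hz
  have hzim : z.im = y := by simp [hz]
  have hzUHP : z ∈ UHP := by
    simp only [UHP, Set.mem_setOf_eq, hzim]; linarith
  set w : ℂ := σ z with hwdef
  have hw : 0 < w.im := hmaps hzUHP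
  have hball : Metric.ball z y ⊆ UHP := by
    intro ζ hζ
    rw [Metric.mem_ball, Complex.dist_eq] at hζ
    have h1 : |(ζ - z).im| < y := lt_of_le_of_lt (Complex.abs_im_le_norm _) hζ
    rw [Complex.sub_im, hzim, abs_lt] at h1
    simp only [UHP, Set.mem_setOf_eq]
    linarith [h1.1]
  have hdenom : ∀ ζ ∈ UHP, σ ζ - (starRingEnd ℂ) w ≠ 0 := by
    intro ζ hζ h
    have h1 : 0 < (σ ζ).im := hmaps hζ
    have h2 : (σ ζ - (starRingEnd ℂ) w).im = 0 := by rw [h]; simp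
    rw [Complex.sub_im, Complex.conj_im] at h2
    linarith
  set g : ℂ → ℂ := fun ζ => (σ ζ - w) / (σ ζ - (starRingEnd ℂ) w) with hg
  have hgdiff : DifferentiableOn ℂ g (Metric.ball z y) := by
    apply DifferentiableOn.div ((hdiff.mono hball).sub (differentiableOn_const _))
      ((hdiff.mono hball).sub (differentiableOn_const _))
    exact fun ζ hζ => hdenom ζ (hball hζ)
  have hg0 : g z = 0 := by simp [hg, ← hwdef]
  have hgmaps : Set.MapsTo g (Metric.ball z y) (Metric.ball (g z) 1) := by
    intro ζ hζ
    rw [hg0, Metric.mem_ball, Complex.dist_eq, sub_zero]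
    have h1 : 0 < (σ ζ).im := hmaps (hball hζ)
    have hlt := abs_sub_lt_abs_sub_conj h1 hw
    rw [hg]
    simp only [norm_div]
    rw [div_lt_one (norm_pos_iff.mpr (hdenom ζ (hball hζ)))]
    exact hlt
  have hz1 : z + 1 ∈ Metric.ball z y := by
    rw [Metric.mem_ball, Complex.dist_eq]
    simpa using hy1
  have hschwarz := Complex.dist_le_div_mul_dist_of_mapsTo_ball hgdiff (hgmaps.mono_right Metric.ball_subset_closedBall) hz1
  rw [hg0, Complex.dist_eq, sub_zero] at hschwarz
  have hd1 : ‖z + 1 - z‖ = 1 := by simp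
  rw [Complex.dist_eq, hd1, mul_one] at hschwarz
  have hfz1 : σ (z + 1) = (T : ℂ) * w := hfe z hzUHP
  -- abbreviations
  have hw0 : w ≠ 0 := fun h => by simp [h] at hw
  have hA : 0 < ‖w‖ := norm_pos_iff.mpr hw0
  have hnum : ‖(T : ℂ) * w - w‖ = (T - 1) * ‖w‖ := by
    have : (T : ℂ) * w - w = ((T : ℂ) - 1) * w := by ring
    rw [this, norm_mul]
    congr 1
    rw [← Complex.ofReal_one, ← Complex.ofReal_sub, Complex.norm_real, Real.norm_eq_abs, abs_of_pos hT1]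
  have hden : ‖(T : ℂ) * w - (starRingEnd ℂ) w‖ ≤ (T + 1) * ‖w‖ := by
    calc ‖(T : ℂ) * w - (starRingEnd ℂ) w‖
        ≤ ‖(T : ℂ) * w‖ + ‖(starRingEnd ℂ) w‖ := by
          exact norm_sub_le _ _
      _ = (T + 1) * ‖w‖ := by
          rw [norm_mul, Complex.norm_conj, Complex.norm_real, Real.norm_eq_abs, abs_of_pos (by linarith : (0:ℝ) < T)]
          ring
  have hTw : 0 < ((T : ℂ) * w).im := by
    rw [Complex.mul_im, Complex.ofReal_re, Complex.ofReal_im]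
    simp only [zero_mul, add_zero]
    exact mul_pos (by linarith : (0:ℝ) < T) hw
  have hgz1 : ‖g (z + 1)‖ =
      ‖(T : ℂ) * w - w‖ / ‖(T : ℂ) * w - (starRingEnd ℂ) w‖ := by
    rw [hg]; simp only [hfz1, norm_div]
  have hdpos : 0 < ‖(T : ℂ) * w - (starRingEnd ℂ) w‖ := by
    have := abs_sub_lt_abs_sub_conj hTw hw
    have h0 : 0 ≤ ‖(T : ℂ) * w - w‖ := norm_nonneg _
    linarith
  rw [hgz1] at hschwarz
  rw [div_le_div_iff₀ hdpos (by linarith : (0:ℝ) < y)] at hschwarz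
  have hfinal : (T - 1) * ‖w‖ * y ≤ (T + 1) * ‖w‖ := by
    calc (T - 1) * ‖w‖ * y = ‖(T : ℂ) * w - w‖ * y := by rw [hnum]
      _ ≤ 1 * ‖(T : ℂ) * w - (starRingEnd ℂ) w‖ := hschwarz
      _ ≤ (T + 1) * ‖w‖ := by rw [one_mul]; exact hden
  have hyy : (T - 1) * y = (T + 1) + (T - 1) := by
    rw [hy]; field_simp
  nlinarith
end
end
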